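/- arXiv:2306.00145 — 3 statements merged into one kernel-verified Lean document; each statement's English description precedes it below -/
import Mathlib

section
/- Let L ≥ 2 be an integer. Define h : ℝ → ℝ by h(x) = 1 − max{0, 1−3x} − max{0, 3x−1} + max{0, 6x−4}, and let g be the L²-fold composition g = h ∘ h ∘ ⋯ ∘ h (L² times). Then g is computed by a ReLU network with L² hidden layers each of width 3 whose coefficients all have absolute value at most 6, and for every function f : ℝ → ℝ computed by a ReLU network with input dimension 1, output dimension 1, and L hidden layers each of width strictly less than 3^{L−1} − 1, one has ∫_0^1 |f(x) − g(x)| dx ≥ 1/9. -/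
open scoped BigOperators
open MeasureTheory

noncomputable section

/-- The ReLU activation function. -/
def relu (x : ℝ) : ℝ := max x 0

/-- `f : ℝ^n → ℝ^m` is an affine map. -/
def IsAffineMap {n m : ℕ} (f : (Fin n → ℝ) → Fin m → ℝ) : Prop :=
  ∃ (A : Matrix (Fin m) (Fin n) ℝ) (b : Fin m → ℝ),
    ∀ x i, f x i = (∑ j, A i j * x j) + b i

/-- `f : ℝ^n → ℝ^m` is an affine map all of whose coefficients have absolute value ≤ c. -/
def IsAffineMapB (c : ℝ) {n m : ℕ} (f : (Fin n → ℝ) → Fin m → ℝ) : Prop :=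
  ∃ (A : Matrix (Fin m) (Fin n) ℝ) (b : Fin m → ℝ),
    (∀ i j, |A i j| ≤ c) ∧ (∀ i, |b i| ≤ c) ∧ ∀ x i, f x i = (∑ j, A i j * x j) + b i

/-- `ComputesA ρ n hidden m f` : `f` is computed by a feedforward network with activation
function `ρ`, input dimension `n`, hidden layer widths `hidden` and output dimension `m`. -/
inductive ComputesA (ρ : ℝ → ℝ) :
    ∀ (n : ℕ), List ℕ → ∀ (m : ℕ), ((Fin n → ℝ) → Fin m → ℝ) → Prop
  | nil {n m : ℕ} (f : (Fin n → ℝ) → Fin m → ℝ) (hf : IsAffineMap f) :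
      ComputesA ρ n [] m f
  | cons {n w m : ℕ} {ws : List ℕ} (f₀ : (Fin n → ℝ) → Fin w → ℝ)
      (g : (Fin w → ℝ) → Fin m → ℝ) (hf : IsAffineMap f₀)
      (hg : ComputesA ρ w ws m g) :
      ComputesA ρ n (w :: ws) m (fun x => g (fun i => ρ (f₀ x i)))

/-- Same as `ComputesA` but all coefficients of all affine maps are bounded by `c`. -/
inductive ComputesAB (ρ : ℝ → ℝ) (c : ℝ) :
    ∀ (n : ℕ), List ℕ → ∀ (m : ℕ), ((Fin n → ℝ) → Fin m → ℝ) → Prop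
  | nil {n m : ℕ} (f : (Fin n → ℝ) → Fin m → ℝ) (hf : IsAffineMapB c f) :
      ComputesAB ρ c n [] m f
  | cons {n w m : ℕ} {ws : List ℕ} (f₀ : (Fin n → ℝ) → Fin w → ℝ)
      (g : (Fin w → ℝ) → Fin m → ℝ) (hf : IsAffineMapB c f₀)
      (hg : ComputesAB ρ c w ws m g) :
      ComputesAB ρ c n (w :: ws) m (fun x => g (fun i => ρ (f₀ x i)))

/-- `f` is computed by a ReLU network of design `(n, hidden…, m)`. -/
def Computes (n : ℕ) (hidden : List ℕ) (m : ℕ) (f : (Fin n → ℝ) → Fin m → ℝ) : Prop :=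
  ComputesA relu n hidden m f

/-- `R` is a linear region of `f` : an open connected set on which `f` is affine,
maximal in the sense that `f` is not affine on any strictly larger open set. -/
def IsLinearRegion {n m : ℕ} (f : (Fin n → ℝ) → Fin m → ℝ) (R : Set (Fin n → ℝ)) : Prop :=
  IsOpen R ∧ IsConnected R ∧ (∃ g, IsAffineMap g ∧ Set.EqOn f g R) ∧
    ∀ R' : Set (Fin n → ℝ), IsOpen R' → R ⊂ R' →
      ¬ ∃ g, IsAffineMap g ∧ Set.EqOn f g R'

/-- The number of linear regions of `f`. -/
def numRegions {n m : ℕ} (f : (Fin n → ℝ) → Fin m → ℝ) : ℕ :=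
  {R | IsLinearRegion f R}.ncard

/-- `R(n, hidden…, m)` : the maximal number of linear regions of a function computed by a
ReLU network of design `(n, hidden…, m)`. -/
def maxRegions (n : ℕ) (hidden : List ℕ) (m : ℕ) : ℕ :=
  sSup {k | ∃ f : (Fin n → ℝ) → Fin m → ℝ, Computes n hidden m f ∧ numRegions f = k}

/-- `f` is piecewise affine: continuous, finitely many linear regions, whose closures cover. -/
def IsPiecewiseAffine {n m : ℕ} (f : (Fin n → ℝ) → Fin m → ℝ) : Prop :=
  Continuous f ∧ {R | IsLinearRegion f R}.Finite ∧
    (⋃ R ∈ {R | IsLinearRegion f R}, closure R) = Set.univ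

/-- The sawtooth-type function `h(x) = 1 - max{0,1-3x} - max{0,3x-1} + max{0,6x-4}`. -/
def hfun (x : ℝ) : ℝ := 1 - max 0 (1 - 3 * x) - max 0 (3 * x - 1) + max 0 (6 * x - 4)

/-!
On `[0, 1]`, `hfun` maps each third affinely onto `[0, 1]`, alternately increasing and
decreasing, so `hfun^[K]` is a sawtooth whose teeth `1 - |3^K x - (2i + 1)|`, `i < (3^K - 1) / 2`,
are disjoint; an affine function is at `L¹`-distance at least `1 / (2 · 3^K)` from each tooth.
Composing the width-3 one-layer network of `hfun` with itself fuses the output map of each copy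
with the input map of the next into one affine map with coefficients at most `6`.

On a line, a ReLU network of widths `w₁, …, w_L` is affine between at most `∏ (wᵢ + 1) - 1`
breakpoints: a unit of a hidden layer adds at most one kink in each gap between the previous
breakpoints. For `K = L²` and `wᵢ + 1 < 3^(L-1)` these breakpoints meet fewer than
`3^(L(L-1)) = 3^K / 3^L` teeth, so at least `2 · 3^K / 9` teeth contain no breakpoint.
-/

open Function

theorem hfun_eq_abs {x : ℝ} (hx : x ∈ Set.Icc (0 : ℝ) 1) :
    ∃ j : ℤ, hfun x = |3 * x - 2 * j| ∧ |3 * x - 2 * j| ≤ 1 := by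
  obtain ⟨hx0, hx1⟩ := hx
  simp only [hfun, abs_le]
  rcases le_total x (1 / 3) with h | h
  · refine ⟨0, ?_, ?_, ?_⟩ <;> push_cast
    · rw [max_eq_right (by linarith), max_eq_left (by linarith), max_eq_left (by linarith),
        abs_of_nonneg (by linarith)]
      ring
    all_goals linarith
  rcases le_total x (2 / 3) with h' | h'
  · refine ⟨1, ?_, ?_, ?_⟩ <;> push_cast
    · rw [max_eq_left (by linarith), max_eq_right (by linarith), max_eq_left (by linarith),
        abs_of_nonpos (by linarith)]
      ring
    all_goals linarith
  · refine ⟨1, ?_, ?_, ?_⟩ <;> push_cast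
    · rw [max_eq_left (by linarith), max_eq_right (by linarith), max_eq_right (by linarith),
        abs_of_nonneg (by linarith)]
      ring
    all_goals linarith

theorem hfun_iterate_eq (K : ℕ) {m : ℤ} (hm : Odd m) {x : ℝ} (hx : x ∈ Set.Icc (0 : ℝ) 1)
    (hxm : |3 ^ K * x - m| ≤ 1) : hfun^[K] x = 1 - |3 ^ K * x - m| := by
  induction K generalizing m x with
  | zero =>
    obtain ⟨hx0, hx1⟩ := hx
    simp only [pow_zero, one_mul, Function.iterate_zero, id] at hxm ⊢
    obtain ⟨hxm₁, hxm₂⟩ := abs_le.mp hxm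
    have hm₁ : -1 ≤ m := by exact_mod_cast (show (-1 : ℝ) ≤ m by linarith)
    have hm₂ : m ≤ 2 := by exact_mod_cast (show (m : ℝ) ≤ 2 by linarith)
    obtain ⟨t, rfl⟩ := hm
    obtain rfl | rfl : t = -1 ∨ t = 0 := by omega
    · norm_num at hxm₂ ⊢
      rw [abs_of_pos (by linarith)]
      linarith
    · norm_num
      rw [abs_of_nonpos (by linarith)]
      ring
  | succ K ih =>
    obtain ⟨j, hj, hj₁⟩ := hfun_eq_abs hx
    have hy : |3 * x - 2 * j| ∈ Set.Icc (0 : ℝ) 1 := ⟨abs_nonneg _, hj₁⟩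
    have hjK : Even (2 * j * 3 ^ K) := (even_two_mul j).mul_right _
    rw [Function.iterate_succ_apply, hj]
    rcases abs_cases (3 * x - 2 * j) with ⟨habs, -⟩ | ⟨habs, -⟩
    · have e : 3 ^ K * |3 * x - 2 * j| - ((m - 2 * j * 3 ^ K : ℤ) : ℝ) = 3 ^ (K + 1) * x - m := by
        rw [habs]; push_cast; ring
      rw [ih (hm.sub_even hjK) hy (by rwa [e]), e]
    · have e : 3 ^ K * |3 * x - 2 * j| - ((2 * j * 3 ^ K - m : ℤ) : ℝ) =
          -(3 ^ (K + 1) * x - m) := by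
        rw [habs]; push_cast; ring
      rw [ih (hjK.sub_odd hm) hy (by rwa [e, abs_neg]), e, abs_neg]

theorem continuous_hfun : Continuous hfun := by
  unfold hfun
  fun_prop

theorem ComputesAB.exists_iterate {ρ : ℝ → ℝ} {c : ℝ} {w : ℕ} {h : ℝ → ℝ}
    {a : (Fin 1 → ℝ) → Fin w → ℝ} {r : (Fin w → ℝ) → Fin 1 → ℝ}
    (ha : IsAffineMapB c a) (hr : IsAffineMapB c r) (hra : IsAffineMapB c (fun v => a (r v)))
    (hh : ∀ u, r (fun i => ρ (a u i)) 0 = h (u 0)) (K : ℕ) :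
    ∃ G : (Fin 1 → ℝ) → Fin 1 → ℝ,
      ComputesAB ρ c 1 (List.replicate (K + 1) w) 1 G ∧ ∀ x, G (fun _ => x) 0 = h^[K + 1] x := by
  have hdeep : ∀ K : ℕ, ∃ g : (Fin w → ℝ) → Fin 1 → ℝ,
      ComputesAB ρ c w (List.replicate K w) 1 g ∧ ∀ v, g v 0 = h^[K] (r v 0) := by
    intro K
    induction K with
    | zero => exact ⟨r, .nil r hr, fun v => rfl⟩
    | succ K ih =>
      obtain ⟨g, hg, hgv⟩ := ih
      refine ⟨_, .cons _ g hra hg, fun v => ?_⟩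
      rw [hgv, hh, Function.iterate_succ_apply]
  obtain ⟨g, hg, hgv⟩ := hdeep K
  refine ⟨_, .cons a g ha hg, fun x => ?_⟩
  rw [hgv, hh, Function.iterate_succ_apply]

theorem exists_computesAB_hfun_iterate (K : ℕ) :
    ∃ G : (Fin 1 → ℝ) → Fin 1 → ℝ, ComputesAB relu 6 1 (List.replicate (K + 1) 3) 1 G ∧
      ∀ x, G (fun _ => x) 0 = hfun^[K + 1] x := by
  refine ComputesAB.exists_iterate (a := fun u => ![1 - 3 * u 0, 3 * u 0 - 1, 6 * u 0 - 4])
    (r := fun v => ![1 - v 0 - v 1 + v 2]) ?_ ?_ ?_ (fun u => ?_) K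
  · refine ⟨!![-3; 3; 6], ![1, -1, -4], ?_, ?_, ?_⟩
    · intro i j; fin_cases i <;> fin_cases j <;> norm_num
    · intro i; fin_cases i <;> norm_num
    · intro u i; fin_cases i <;> simp <;> ring
  · refine ⟨!![-1, -1, 1], ![1], ?_, ?_, ?_⟩
    · intro i j; fin_cases i; fin_cases j <;> norm_num
    · intro i; fin_cases i; norm_num
    · intro v i; fin_cases i; simp [Fin.sum_univ_three]; ring
  · refine ⟨!![3, 3, -3; -3, -3, 3; -6, -6, 6], ![-2, 2, 2], ?_, ?_, ?_⟩
    · intro i j; fin_cases i <;> fin_cases j <;> norm_num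
    · intro i; fin_cases i <;> norm_num
    · intro v i; fin_cases i <;> simp [Fin.sum_univ_three] <;> ring
  · simp [hfun, relu, max_comm]

theorem IsAffineMap.continuous {n m : ℕ} {F : (Fin n → ℝ) → Fin m → ℝ} (hF : IsAffineMap F) :
    Continuous F := by
  obtain ⟨A, b, hAb⟩ := hF
  rw [show F = fun x i => ∑ j, A i j * x j + b i from funext₂ hAb]
  fun_prop

theorem ComputesA.continuous {ρ : ℝ → ℝ} (hρ : Continuous ρ) {n m : ℕ} {ws : List ℕ}
    {F : (Fin n → ℝ) → Fin m → ℝ} (hF : ComputesA ρ n ws m F) : Continuous F := by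
  induction hF with
  | nil F hF => exact hF.continuous
  | cons F₀ g hF₀ _ ih => exact ih.comp (continuous_pi fun i => hρ.comp
      ((continuous_apply i).comp hF₀.continuous))

theorem exists_finset_card_le_of_separated {α : Type*} [LinearOrder α] {Z : Set α}
    (S : Finset α) (hZ : ∀ z₁ ∈ Z, ∀ z₂ ∈ Z, z₁ < z₂ → ∃ s ∈ S, z₁ < s ∧ s < z₂) :
    ∃ T : Finset α, (T : Set α) = Z ∧ T.card ≤ S.card + 1 := by
  classical
  have hmono : StrictMonoOn (fun z => (S.filter (· < z)).card) Z := by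
    intro z₁ h₁ z₂ h₂ hlt
    obtain ⟨s, hs, hs₁, hs₂⟩ := hZ z₁ h₁ z₂ h₂ hlt
    refine Finset.card_lt_card ((Finset.ssubset_iff_of_subset fun x hx => ?_).2
      ⟨s, by simp [hs, hs₂], by simp [hs₁.le]⟩)
    simp only [Finset.mem_filter] at hx ⊢
    exact ⟨hx.1, hx.2.trans hlt⟩
  have hmaps : Set.MapsTo (fun z => (S.filter (· < z)).card) Z (Finset.range (S.card + 1)) :=
    fun z _ => by simpa [Nat.lt_succ_iff] using Finset.card_filter_le S (· < z)
  have hfin : Z.Finite := Set.Finite.of_injOn hmaps hmono.injOn (Finset.finite_toSet _)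
  refine ⟨hfin.toFinset, hfin.coe_toFinset, ?_⟩
  rw [← Set.ncard_eq_toFinset_card Z hfin, ← Finset.card_range (S.card + 1),
    ← Set.ncard_coe_finset]
  exact Set.ncard_le_ncard_of_injOn _ hmaps hmono.injOn

theorem exists_Ioo_superset_Icc_notMem (S : Finset ℝ) {a b : ℝ}
    (h : ∀ s ∈ S, s ∉ Set.Icc a b) : ∃ u v, u < a ∧ b < v ∧ ∀ s ∈ S, s ∉ Set.Ioo u v := by
  classical
  set U := insert (a - 1) (S.filter (· < a))
  set V := insert (b + 1) (S.filter (b < ·))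
  refine ⟨U.max' (Finset.insert_nonempty _ _), V.min' (Finset.insert_nonempty _ _),
    (Finset.max'_lt_iff _ _).2 fun y hy => ?_, (Finset.lt_min'_iff _ _).2 fun y hy => ?_,
    fun s hs ⟨hu, hv⟩ => ?_⟩
  · simp only [U, Finset.mem_insert, Finset.mem_filter] at hy
    rcases hy with rfl | ⟨-, hy⟩ <;> linarith
  · simp only [V, Finset.mem_insert, Finset.mem_filter] at hy
    rcases hy with rfl | ⟨-, hy⟩ <;> linarith
  · rcases lt_or_ge s a with hsa | hsa
    · exact (U.le_max' s (by simp [U, hs, hsa])).not_gt hu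
    rcases le_or_gt s b with hsb | hsb
    · exact h s hs ⟨hsa, hsb⟩
    · exact (V.min'_le s (by simp [V, hs, hsb])).not_gt hv

theorem mul_add_nonneg_or_nonpos_or_root (c d a b : ℝ) :
    (∀ x ∈ Set.Ioo a b, 0 ≤ c * x + d) ∨ (∀ x ∈ Set.Ioo a b, c * x + d ≤ 0) ∨
      ∃ z ∈ Set.Ioo a b, c ≠ 0 ∧ c * z + d = 0 := by
  by_contra! ⟨⟨x₁, hx₁, h₁⟩, ⟨x₂, hx₂, h₂⟩, h⟩
  have hc : c ≠ 0 := by rintro rfl; linarith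
  have hz : ∀ x, c * x + d = c * (x - -d / c) := fun x => by field_simp; ring
  rw [hz] at h₁ h₂
  -- The root `-d / c` lies strictly between `x₁` and `x₂`.
  have : (x₁ - -d / c) * (x₂ - -d / c) < 0 := by
    have := mul_neg_of_neg_of_pos h₁ h₂
    nlinarith [mul_self_pos.2 hc]
  refine h (-d / c) ⟨?_, ?_⟩ hc (by rw [hz, sub_self, mul_zero]) <;>
    rcases mul_neg_iff.1 this with ⟨h₃, h₄⟩ | ⟨h₃, h₄⟩ <;> linarith [hx₁.1, hx₁.2, hx₂.1, hx₂.2]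

theorem eq_zero_of_eventually_mul_add_eq_zero {c d z : ℝ}
    (h : ∀ᶠ x in nhds z, c * x + d = 0) : c = 0 := by
  obtain ⟨ε, hε, hball⟩ := Metric.eventually_nhds_iff.1 h
  have h₁ := hball (y := z) (by simpa using hε)
  have h₂ := hball (y := z + ε / 2) (by rw [Real.dist_eq, abs_of_pos] <;> linarith)
  have : c * (ε / 2) = 0 := by linarith
  simpa [hε.ne'] using this

def AffineBetween (S : Finset ℝ) (f : ℝ → ℝ) : Prop :=
  ∀ a b : ℝ, (∀ s ∈ S, s ∉ Set.Ioo a b) → ∃ c d : ℝ, ∀ x ∈ Set.Ioo a b, f x = c * x + d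

namespace AffineBetween

theorem mono {S T : Finset ℝ} {f : ℝ → ℝ} (hf : AffineBetween S f) (hST : S ⊆ T) :
    AffineBetween T f :=
  fun a b hab => hf a b fun s hs => hab s (hST hs)

theorem isAffineMap {S : Finset ℝ} {n m : ℕ} {γ : ℝ → Fin n → ℝ}
    (hγ : ∀ j, AffineBetween S (γ · j)) {F : (Fin n → ℝ) → Fin m → ℝ} (hF : IsAffineMap F)
    (i : Fin m) : AffineBetween S (fun t => F (γ t) i) := by
  obtain ⟨A, b, hAb⟩ := hF
  intro a₀ b₀ hab
  choose c d hcd using fun j => hγ j a₀ b₀ hab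
  refine ⟨∑ j, A i j * c j, ∑ j, A i j * d j + b i, fun x hx => ?_⟩
  simp only [hAb, hcd _ x hx, mul_add, Finset.sum_add_distrib, Finset.sum_mul, mul_assoc]
  ring

open Filter Topology in
theorem relu_comp {S : Finset ℝ} {f : ℝ → ℝ} (hf : AffineBetween S f) :
    ∃ Z : Finset ℝ, Z.card ≤ S.card + 1 ∧ AffineBetween (S ∪ Z) (fun t => relu (f t)) := by
  classical
  set Z : Set ℝ := {z | z ∉ S ∧ f z = 0 ∧ ¬ ∀ᶠ x in 𝓝 z, f x = 0}
  -- Two such zeros cannot share a gap of `S`: there `f` is affine and not identically zero.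
  have hsep : ∀ z₁ ∈ Z, ∀ z₂ ∈ Z, z₁ < z₂ → ∃ s ∈ S, z₁ < s ∧ s < z₂ := by
    rintro z₁ ⟨h₁S, h₁0, h₁⟩ z₂ ⟨h₂S, h₂0, -⟩ hlt
    by_contra! hgap
    obtain ⟨u, v, hu, hv, huv⟩ := exists_Ioo_superset_Icc_notMem S (a := z₁) (b := z₂)
      fun s hs ⟨hs₁, hs₂⟩ => by
        rcases hs₁.eq_or_lt with rfl | hs₁
        · exact h₁S hs
        rcases hs₂.eq_or_lt with rfl | hs₂
        · exact h₂S hs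
        · exact (hgap s hs hs₁).not_gt hs₂
    obtain ⟨c, d, hcd⟩ := hf u v huv
    rw [hcd z₁ ⟨hu, hlt.trans hv⟩] at h₁0
    rw [hcd z₂ ⟨hu.trans hlt, hv⟩] at h₂0
    have hc : c = 0 := by
      have : c * (z₂ - z₁) = 0 := by linarith
      simpa [sub_ne_zero.2 hlt.ne'] using this
    refine h₁ (Filter.mem_of_superset (Ioo_mem_nhds hu (hlt.trans hv)) fun x hx => ?_)
    show f x = 0
    rw [hcd x hx, hc, zero_mul, zero_add]
    simpa [hc] using h₁0
  obtain ⟨T, hTZ, hT⟩ := exists_finset_card_le_of_separated S hsep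
  refine ⟨T, hT, fun a b hab => ?_⟩
  obtain ⟨c, d, hcd⟩ := hf a b fun s hs => hab s (Finset.mem_union_left _ hs)
  rcases mul_add_nonneg_or_nonpos_or_root c d a b with hpos | hneg | ⟨z, hz, hc, hz0⟩
  · exact ⟨c, d, fun x hx => show relu (f x) = _ by rw [hcd x hx]; exact max_eq_left (hpos x hx)⟩
  · exact ⟨0, 0, fun x hx => show relu (f x) = _ by
    rw [hcd x hx, zero_mul, zero_add]; exact max_eq_right (hneg x hx)⟩
  · refine absurd hz (hab z (Finset.mem_union_right _ ?_))
    rw [← Finset.mem_coe, hTZ]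
    refine ⟨fun hzS => hab z (Finset.mem_union_left _ hzS) hz, by rw [hcd z hz, hz0],
      fun hev => hc (eq_zero_of_eventually_mul_add_eq_zero (d := d) (z := z) ?_)⟩
    filter_upwards [hev, Ioo_mem_nhds hz.1 hz.2] with x h0 hx
    rwa [← hcd x hx]

theorem relu_layer {S : Finset ℝ} {n w : ℕ} {γ : ℝ → Fin n → ℝ}
    (hγ : ∀ j, AffineBetween S (γ · j)) {F : (Fin n → ℝ) → Fin w → ℝ} (hF : IsAffineMap F) :
    ∃ S' : Finset ℝ, S'.card + 1 ≤ (w + 1) * (S.card + 1) ∧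
      ∀ i, AffineBetween S' (fun t => relu (F (γ t) i)) := by
  classical
  choose Z hZ hZf using fun i => (isAffineMap hγ hF i).relu_comp
  refine ⟨S ∪ Finset.univ.biUnion Z, ?_, fun i => (hZf i).mono
    (Finset.union_subset_union_right (Finset.subset_biUnion_of_mem Z (Finset.mem_univ i)))⟩
  have h₁ := Finset.card_union_le S (Finset.univ.biUnion Z)
  have h₂ := Finset.card_biUnion_le_card_mul Finset.univ Z (S.card + 1) fun i _ => hZ i
  rw [Finset.card_univ, Fintype.card_fin] at h₂
  nlinarith

end AffineBetween

theorem ComputesA.exists_affineBetween {n m : ℕ} {ws : List ℕ} {F : (Fin n → ℝ) → Fin m → ℝ}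
    (hF : ComputesA relu n ws m F) (S : Finset ℝ) (γ : ℝ → Fin n → ℝ)
    (hγ : ∀ j, AffineBetween S (γ · j)) :
    ∃ S' : Finset ℝ, S'.card + 1 ≤ (S.card + 1) * (ws.map (· + 1)).prod ∧
      ∀ i, AffineBetween S' (fun t => F (γ t) i) := by
  induction hF generalizing S with
  | nil F hF => exact ⟨S, by simp, AffineBetween.isAffineMap hγ hF⟩
  | @cons n w m ws F₀ g hF₀ _ ih =>
    obtain ⟨S₁, h₁, hS₁⟩ := AffineBetween.relu_layer hγ hF₀
    obtain ⟨S₂, h₂, hS₂⟩ := ih S₁ _ hS₁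
    refine ⟨S₂, h₂.trans ?_, hS₂⟩
    rw [List.map_cons, List.prod_cons, ← mul_assoc, mul_comm _ (w + 1)]
    exact Nat.mul_le_mul_right _ h₁

theorem ComputesA.exists_affineBetween_line {ws : List ℕ} {f : (Fin 1 → ℝ) → Fin 1 → ℝ}
    (hf : ComputesA relu 1 ws 1 f) : ∃ S : Finset ℝ, S.card + 1 ≤ (ws.map (· + 1)).prod ∧
      AffineBetween S (fun t => f (fun _ => t) 0) := by
  obtain ⟨S, hS, hfS⟩ := hf.exists_affineBetween ∅ (fun t _ => t)
    fun _ _ _ _ => ⟨1, 0, fun x _ => by ring⟩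
  exact ⟨S, by simpa using hS, hfS 0⟩

theorem integral_mul_add (p q a b : ℝ) :
    ∫ x in a..b, (p * x + q) = p * (b ^ 2 - a ^ 2) / 2 + q * (b - a) := by
  rw [intervalIntegral.integral_add ((continuous_const_mul p).intervalIntegrable _ _)
    intervalIntegrable_const, intervalIntegral.integral_const_mul, integral_id,
    intervalIntegral.integral_const, smul_eq_mul]
  ring

theorem half_le_integral_abs_mul_add_sub_tent (c d : ℝ) :
    1 / 2 ≤ ∫ u in (-1 : ℝ)..1, |c * u + d - (1 - |u|)| := by
  set φ : ℝ → ℝ := fun u => c * u + d - (1 - |u|)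
  have hφ : ∀ a b, IntervalIntegrable (fun u => |φ u|) MeasureTheory.volume a b :=
    fun a b => (by fun_prop : Continuous fun u => |φ u|).intervalIntegrable a b
  have hle : ∀ a b, a ≤ b → |∫ u in a..b, φ u| ≤ ∫ u in a..b, |φ u| :=
    fun a b hab => intervalIntegral.abs_integral_le_integral_abs hab
  have hleft : ∀ a b, a ≤ 0 → b ≤ 0 →
      ∫ u in a..b, φ u = (c - 1) * (b ^ 2 - a ^ 2) / 2 + (d - 1) * (b - a) := by
    intro a b ha hb
    rw [← integral_mul_add]
    refine intervalIntegral.integral_congr fun u hu => ?_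
    have : u ≤ 0 := (Set.mem_uIcc.1 hu).elim (fun h => h.2.trans hb) (fun h => h.2.trans ha)
    simp only [φ, abs_of_nonpos this]
    ring
  have hright : ∀ a b, 0 ≤ a → 0 ≤ b →
      ∫ u in a..b, φ u = (c + 1) * (b ^ 2 - a ^ 2) / 2 + (d - 1) * (b - a) := by
    intro a b ha hb
    rw [← integral_mul_add]
    refine intervalIntegral.integral_congr fun u hu => ?_
    have : 0 ≤ u := (Set.mem_uIcc.1 hu).elim (fun h => ha.trans h.1) (fun h => hb.trans h.1)
    simp only [φ, abs_of_nonneg this]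
    ring
  -- The signs `+, -, -, +` on the quarters annihilate affine functions and give `1/2` on the tent.
  rw [← intervalIntegral.integral_add_adjacent_intervals (hφ (-1) (-1 / 2)) (hφ _ 1),
    ← intervalIntegral.integral_add_adjacent_intervals (hφ (-1 / 2) 0) (hφ _ 1),
    ← intervalIntegral.integral_add_adjacent_intervals (hφ 0 (1 / 2)) (hφ _ 1)]
  have h₁ := hle (-1) (-1 / 2) (by norm_num)
  have h₂ := hle (-1 / 2) 0 (by norm_num)
  have h₃ := hle 0 (1 / 2) (by norm_num)
  have h₄ := hle (1 / 2) 1 (by norm_num)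
  rw [hleft _ _ (by norm_num) (by norm_num)] at h₁ h₂
  rw [hright _ _ (by norm_num) (by norm_num)] at h₃ h₄
  rw [abs_le] at h₁ h₂ h₃ h₄
  linarith [h₁.2, h₂.1, h₃.1, h₄.2]

theorem le_setIntegral_abs_sub_tent {p : ℝ} (hp : 0 < p) (k : ℝ) {f g : ℝ → ℝ} {c d : ℝ}
    (hf : ∀ x ∈ Set.Ioo (k / p) ((k + 2) / p), f x = c * x + d)
    (hg : ∀ x ∈ Set.Ioo (k / p) ((k + 2) / p), g x = 1 - |p * x - (k + 1)|) :
    1 / (2 * p) ≤ ∫ x in Set.Ioo (k / p) ((k + 2) / p), |f x - g x| := by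
  rw [MeasureTheory.setIntegral_congr_fun (g := fun x => |c * x + d - (1 - |p * x - (k + 1)|)|)
      measurableSet_Ioo fun x hx => by simp only [hf x hx, hg x hx],
    ← integral_Ioc_eq_integral_Ioo, ← intervalIntegral.integral_of_le (by gcongr; linarith)]
  have h := intervalIntegral.integral_comp_mul_sub
    (fun u => |c / p * u + (c * (k + 1) / p + d) - (1 - |u|)|) hp.ne' (k + 1)
    (a := k / p) (b := (k + 2) / p)
  have e : ∀ x, c / p * (p * x - (k + 1)) + (c * (k + 1) / p + d) = c * x + d := fun x => by
    field_simp; ring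
  rw [show p * (k / p) - (k + 1) = -1 by field_simp; ring,
    show p * ((k + 2) / p) - (k + 1) = 1 by field_simp; ring] at h
  simp only [e] at h
  rw [h, smul_eq_mul, one_div, mul_inv, mul_comm]
  gcongr
  linarith [half_le_integral_abs_mul_add_sub_tent (c / p) (c * (k + 1) / p + d)]

open Classical in
theorem card_filter_exists_mem_le {ι α : Type*} (s : Finset ι) {I : ι → Set α}
    (hI : Pairwise (Disjoint on I)) (S : Finset α) :
    (s.filter fun i => ∃ x ∈ S, x ∈ I i).card ≤ S.card := by
  calc (s.filter fun i => ∃ x ∈ S, x ∈ I i).card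
      ≤ (S.biUnion fun x => s.filter (x ∈ I ·)).card :=
        Finset.card_le_card fun i hi => by
          obtain ⟨hi, x, hx, hxi⟩ := Finset.mem_filter.1 hi
          exact Finset.mem_biUnion.2 ⟨x, hx, Finset.mem_filter.2 ⟨hi, hxi⟩⟩
    _ ≤ S.card * 1 := Finset.card_biUnion_le_card_mul _ _ _ fun x _ =>
        Finset.card_le_one.2 fun i hi j hj => by
          by_contra hij
          exact Set.disjoint_left.1 (hI hij) (Finset.mem_filter.1 hi).2 (Finset.mem_filter.1 hj).2
    _ = S.card := mul_one _

theorem MeasureTheory.sum_setIntegral_le_setIntegral {X ι : Type*} [MeasurableSpace X]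
    {μ : Measure X} (s : Finset ι) {U : ι → Set X} {A : Set X} {h : X → ℝ}
    (hU : ∀ i ∈ s, MeasurableSet (U i)) (hUA : ∀ i ∈ s, U i ⊆ A)
    (hdisj : Pairwise (Disjoint on U)) (hint : IntegrableOn h A μ) (hh : 0 ≤ h) :
    ∑ i ∈ s, ∫ x in U i, h x ∂μ ≤ ∫ x in A, h x ∂μ := by
  rw [← integral_biUnion_finset s hU (hdisj.set_pairwise _)
    fun i hi => hint.mono_set (hUA i hi)]
  exact setIntegral_mono_set hint (ae_of_all _ hh) (Set.iUnion₂_subset hUA).eventuallyLE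

theorem pairwise_disjoint_Ioo_div {p : ℝ} (hp : 0 < p) :
    Pairwise (Disjoint on fun i : ℕ => Set.Ioo (2 * i / p) ((2 * i + 2) / p)) := by
  intro i j hij
  wlog h : i < j generalizing i j
  · exact (this hij.symm (hij.symm.lt_of_le (not_lt.1 h))).symm
  refine Set.disjoint_left.2 fun x hx hx' => ?_
  have : (2 * i + 2 : ℝ) / p ≤ 2 * j / p := by
    gcongr
    exact_mod_cast (by omega : 2 * i + 2 ≤ 2 * j)
  exact (hx.2.trans_le this).not_gt hx'.1

theorem sub_card_le_integral_abs_sub_hfun_iterate (K : ℕ) {S : Finset ℝ} {f : ℝ → ℝ}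
    (hf : Continuous f) (hfS : AffineBetween S f) :
    ((3 : ℝ) ^ K - 1) / 2 - S.card ≤ 2 * 3 ^ K * ∫ x in Set.Icc (0 : ℝ) 1, |f x - hfun^[K] x| := by
  classical
  set p : ℝ := 3 ^ K
  have hp : 0 < p := by positivity
  set T := (3 ^ K - 1) / 2
  have hT : 2 * (T : ℝ) + 1 = p := by
    obtain ⟨t, ht⟩ : Odd (3 ^ K) := Odd.pow ⟨1, rfl⟩
    rw [show T = t by simp only [T, ht]; omega]
    show (2 * t + 1 : ℝ) = 3 ^ K
    exact_mod_cast ht.symm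
  set tooth : ℕ → Set ℝ := fun i => Set.Ioo (2 * i / p) ((2 * i + 2) / p)
  set good := (Finset.range T).filter fun i => ¬ ∃ s ∈ S, s ∈ tooth i
  have htooth : ∀ i ∈ Finset.range T, tooth i ⊆ Set.Icc 0 1 := by
    intro i hi x hx
    have : (2 * i + 2 : ℝ) ≤ p := by
      rw [← hT]; exact_mod_cast (by simp at hi; omega : 2 * i + 2 ≤ 2 * T + 1)
    exact ⟨(div_nonneg (by positivity) hp.le).trans hx.1.le,
      hx.2.le.trans ((div_le_one hp).2 this)⟩
  have hgood : (T : ℝ) - S.card ≤ good.card := by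
    set bad := (Finset.range T).filter fun i => ∃ s ∈ S, s ∈ tooth i
    have hbad : bad.card ≤ S.card := by
      convert card_filter_exists_mem_le (Finset.range T) (pairwise_disjoint_Ioo_div hp) S
    have h : bad.card + good.card = T := by
      rw [← Finset.card_range T]; exact Finset.card_filter_add_card_filter_not _
    have : (T : ℝ) = bad.card + good.card := by exact_mod_cast h.symm
    have : (bad.card : ℝ) ≤ S.card := by exact_mod_cast hbad
    linarith
  have htooth_int : ∀ i ∈ good, 1 / (2 * p) ≤ ∫ x in tooth i, |f x - hfun^[K] x| := by
    intro i hi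
    obtain ⟨hi, hiS⟩ := Finset.mem_filter.1 hi
    obtain ⟨c, d, hcd⟩ := hfS _ _ fun s hs hst => hiS ⟨s, hs, hst⟩
    refine le_setIntegral_abs_sub_tent hp (2 * i) hcd fun x hx => ?_
    have hx' : |p * x - ((2 * i + 1 : ℤ) : ℝ)| ≤ 1 := by
      obtain ⟨h₁, h₂⟩ := hx
      rw [div_lt_iff₀ hp] at h₁
      rw [lt_div_iff₀ hp] at h₂
      push_cast
      rw [abs_le]
      constructor <;> linarith
    rw [hfun_iterate_eq K ⟨i, rfl⟩ (htooth i hi hx) hx']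
    push_cast
    rfl
  calc ((3 : ℝ) ^ K - 1) / 2 - S.card ≤ good.card := by linarith
    _ = 2 * p * ∑ _i ∈ good, 1 / (2 * p) := by
      rw [Finset.sum_const, nsmul_eq_mul]; field_simp
    _ ≤ 2 * p * ∑ i ∈ good, ∫ x in tooth i, |f x - hfun^[K] x| := by
      gcongr with i hi; exact htooth_int i hi
    _ ≤ 2 * p * ∫ x in Set.Icc (0 : ℝ) 1, |f x - hfun^[K] x| := by
      gcongr
      refine MeasureTheory.sum_setIntegral_le_setIntegral good (fun _ _ => measurableSet_Ioo)
        (fun i hi => htooth i (Finset.mem_filter.1 hi).1) (pairwise_disjoint_Ioo_div hp)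
        ?_ fun x => abs_nonneg _
      exact ((hf.sub (continuous_hfun.iterate K)).abs).integrableOn_Icc

/-- the `L²`-fold composition of `hfun` is computed by a ReLU network with
`L²` hidden layers of width 3 and coefficients bounded by 6, and cannot be `L¹([0,1])`
approximated within `1/9` by any ReLU network of depth `L` and width `< 3^{L-1} - 1`. -/
theorem stmt_13 (L : ℕ) (hL : 2 ≤ L) :
    ∃ G : (Fin 1 → ℝ) → Fin 1 → ℝ,
      ComputesAB relu 6 1 (List.replicate (L ^ 2) 3) 1 G ∧
      (∀ x : ℝ, G (fun _ => x) 0 = hfun^[L ^ 2] x) ∧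
      ∀ w : Fin L → ℕ, (∀ i, w i < 3 ^ (L - 1) - 1) →
        ∀ f : (Fin 1 → ℝ) → Fin 1 → ℝ, Computes 1 (List.ofFn w) 1 f →
          (1 : ℝ) / 9 ≤ ∫ x in Set.Icc (0:ℝ) 1, |f (fun _ => x) 0 - hfun^[L ^ 2] x| := by
  obtain ⟨K, hK⟩ : ∃ K, L ^ 2 = K + 1 :=
    ⟨L ^ 2 - 1, by have := Nat.one_le_pow 2 L (by omega); omega⟩
  obtain ⟨G, hG, hGx⟩ := exists_computesAB_hfun_iterate K
  refine ⟨G, hK ▸ hG, hK ▸ hGx, fun w hw f hf => ?_⟩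
  obtain ⟨S, hS, hfS⟩ := ComputesA.exists_affineBetween_line hf
  have hSN : S.card + 1 ≤ 3 ^ ((L - 1) * L) := by
    calc S.card + 1 ≤ ∏ i, (w i + 1) := by
          simpa [List.map_ofFn, List.prod_ofFn, Function.comp_def] using hS
      _ ≤ (3 ^ (L - 1)) ^ L := by
          simpa using Finset.prod_le_pow_card Finset.univ (fun i => w i + 1) (3 ^ (L - 1))
            fun i _ => by have := hw i; omega
      _ = 3 ^ ((L - 1) * L) := (pow_mul _ _ _).symm
  have hfc := ComputesA.continuous (by unfold relu; fun_prop) hf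
  have hbound := sub_card_le_integral_abs_sub_hfun_iterate (L ^ 2) (by fun_prop) hfS
  have hX : 9 * (3 : ℝ) ^ ((L - 1) * L) ≤ 3 ^ (L ^ 2) := by
    rw [show L ^ 2 = (L - 1) * L + L by
      rw [← Nat.succ_mul, Nat.succ_eq_add_one, Nat.sub_add_cancel (by omega), sq],
      pow_add, mul_comm]
    gcongr
    exact le_trans (by norm_num) (pow_le_pow_right₀ (by norm_num : (1 : ℝ) ≤ 3) hL)
  have hSN' : (S.card : ℝ) + 1 ≤ 3 ^ ((L - 1) * L) := by exact_mod_cast hSN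
  refine le_of_mul_le_mul_left ?_ (by positivity : (0 : ℝ) < 2 * 3 ^ (L ^ 2))
  linarith
end
end

section
/- For every n_0 ≥ 1 there is a constant C > 0, depending only on n_0, such that every compactly supported function f : ℝ^{n_0} → ℝ computed by a ReLU network with L hidden layers each of width N can also be computed exactly by a ReLU network whose hidden layers all have width 2n_0 + 6 and whose number of hidden layers is at most C · (1 + N^{n_0})^{L·(n_0+1)^2}. -/
open scoped BigOperators
open MeasureTheory

noncomputable section

/-!
A ReLU network function is a difference `P - Q` of convex functions that are affine on each cell
of a finite family of open cells with dense union. A hidden layer of width `w` refines each cell by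
the sign patterns of `w` functionals that are affine on it; only patterns whose region has nonempty
interior survive, and by deletion–restriction on the hyperplane arrangement there are at most
`(w + 1)^n` of them. Hence `L` layers of width `N` leave at most `(N + 1)^{nL}` cells.

A convex function that is affine on the cells of such a family is the maximum of its affine
pieces. A maximum of `k + 1` affine functions is computed by `k` hidden layers of width `2n + 5`
that carry `x` through (`t = relu t - relu (-t)`) and update a running maximum
(`max r s = r + relu (s - r)`); running this for `P` and then for `Q` computes `f = P - Q`.
-/

open Set Module Function

section SignPatterns

variable {E : Type*}

def signRegion {ι : Type*} (u : ι → E → ℝ) (σ : ι → Bool) : Set E :=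
  {x | ∀ i, 0 < u i x ↔ σ i = true}

lemma signRegion_cons {s : ℕ} (v : E → ℝ) (u : Fin s → E → ℝ) (b : Bool) (σ : Fin s → Bool) :
    signRegion (Fin.cons v u : Fin (s + 1) → E → ℝ) (Fin.cons b σ) =
      {x | 0 < v x ↔ b = true} ∩ signRegion u σ := by
  ext x
  simp [signRegion, Fin.forall_fin_succ]

variable [TopologicalSpace E]

def fullSignPatterns {ι : Type*} (u : ι → E → ℝ) : Set (ι → Bool) :=
  {σ | (interior (signRegion u σ)).Nonempty}

lemma ncard_fullSignPatterns_cons_le {s : ℕ} (v : E → ℝ) (u : Fin s → E → ℝ)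
    (D : Set (Fin s → Bool)) (hD : ∀ ρ, ∀ x ∈ interior (signRegion u ρ),
      ∀ y ∈ interior (signRegion u ρ), 0 < v x → v y ≤ 0 → ρ ∈ D) :
    (fullSignPatterns (Fin.cons v u : Fin (s + 1) → E → ℝ)).ncard ≤
      (fullSignPatterns u).ncard + D.ncard := by
  set S := fullSignPatterns (Fin.cons v u : Fin (s + 1) → E → ℝ)
  set T := {ρ | Fin.cons true ρ ∈ S}
  set F := {ρ | Fin.cons false ρ ∈ S}
  have hS : S ⊆ Fin.cons true '' T ∪ Fin.cons false '' F := by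
    intro σ hσ
    rw [← Fin.cons_self_tail σ] at hσ ⊢
    generalize σ 0 = b at hσ ⊢
    cases b
    exacts [Or.inr ⟨_, hσ, rfl⟩, Or.inl ⟨_, hσ, rfl⟩]
  have hTF : T ∪ F ⊆ fullSignPatterns u := by
    rintro ρ (⟨x, hx⟩ | ⟨x, hx⟩) <;>
      exact ⟨x, interior_mono inter_subset_right (by rwa [signRegion_cons] at hx)⟩
  have hcap : T ∩ F ⊆ D := by
    rintro ρ ⟨⟨x, hx⟩, ⟨y, hy⟩⟩
    rw [signRegion_cons, interior_inter] at hx hy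
    exact hD ρ x hx.2 y hy.2 (by simpa using interior_subset hx.1)
      (by simpa using interior_subset hy.1)
  calc S.ncard ≤ (Fin.cons true '' T ∪ Fin.cons false '' F).ncard :=
        ncard_le_ncard hS (toFinite _)
    _ ≤ T.ncard + F.ncard := by
      refine (ncard_union_le _ _).trans_eq ?_
      rw [ncard_image_of_injective _ (Fin.cons_right_injective _),
        ncard_image_of_injective _ (Fin.cons_right_injective _)]
    _ = (T ∪ F).ncard + (T ∩ F).ncard :=
      (ncard_union_add_ncard_inter _ _ (toFinite _) (toFinite _)).symm
    _ ≤ _ := add_le_add (ncard_le_ncard hTF (toFinite _)) (ncard_le_ncard hcap (toFinite _))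

lemma IsOpen.inter_interior_signRegion_congr {ι : Type*} {c : Set E} (hc : IsOpen c)
    {u v : ι → E → ℝ} (h : ∀ i, EqOn (u i) (v i) c) (σ : ι → Bool) :
    c ∩ interior (signRegion u σ) = c ∩ interior (signRegion v σ) := by
  have : c ∩ signRegion u σ = c ∩ signRegion v σ := by
    ext x
    exact and_congr_right fun hx => forall_congr' fun i => by rw [h i hx]
  rw [← hc.interior_eq, ← interior_inter, ← interior_inter, this]

end SignPatterns

section Arrangements

variable {E : Type*} [NormedAddCommGroup E] [NormedSpace ℝ E]

lemma AffineMap.convexOn_univ (a : E →ᵃ[ℝ] ℝ) : ConvexOn ℝ univ a := by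
  rw [a.decomp]
  exact (a.linear.convexOn convex_univ).add (convexOn_const _ convex_univ)

lemma AffineMap.concaveOn_univ (a : E →ᵃ[ℝ] ℝ) : ConcaveOn ℝ univ a := by
  rw [a.decomp]
  exact (a.linear.concaveOn convex_univ).add (concaveOn_const _ convex_univ)

lemma convex_signRegion {ι : Type*} (A : ι → E →ᵃ[ℝ] ℝ) (σ : ι → Bool) :
    Convex ℝ (signRegion (fun i => A i) σ) := by
  have : signRegion (fun i => A i) σ = ⋂ i, A i ⁻¹' {r | 0 < r ↔ σ i = true} := by
    ext x; simp [signRegion]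
  rw [this]
  refine convex_iInter fun i => (Convex.affine_preimage _ ?_)
  cases σ i <;> simp only [Bool.false_eq_true, iff_false, not_lt, iff_true]
  exacts [convex_Iic 0, convex_Ioi 0]

lemma dense_setOf_ne_zero {a : E →ᵃ[ℝ] ℝ} (ha : a ≠ 0) : Dense {x | a x ≠ 0} := by
  rw [← compl_ofPred, ← interior_eq_empty_iff_dense_compl]
  by_contra hne
  have hzero : EqOn a 0 (interior {x | a x = 0}) := fun x hx => by
    simpa using (interior_subset hx : x ∈ {x | a x = 0})
  exact ha (AffineMap.ext_on (isOpen_interior.affineSpan_eq_top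
    (nonempty_iff_ne_empty.2 hne)) hzero)

variable [FiniteDimensional ℝ E]

lemma Convex.exists_mem_interior_eq_zero {C : Set E} (hC : Convex ℝ C) (a : E →ᵃ[ℝ] ℝ)
    {x y : E} (hx : x ∈ interior C) (hy : y ∈ interior C) (hax : 0 ≤ a x) (hay : a y ≤ 0) :
    ∃ z ∈ interior C, a z = 0 := by
  obtain ⟨z, hz, hz0⟩ := (convex_segment y x).isPreconnected.intermediate_value
    (left_mem_segment ℝ y x) (right_mem_segment ℝ y x)
    a.continuous_of_finiteDimensional.continuousOn ⟨hay, hax⟩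
  exact ⟨z, hC.interior.segment_subset hy hx hz, hz0⟩

/-- A pattern realised on open sets on both sides of the hyperplane `a = 0` is realised on an open
subset of the hyperplane, parametrised by `ker a.linear` through `x₀`. -/
lemma mem_fullSignPatterns_restrict {ι : Type*} (a : E →ᵃ[ℝ] ℝ) {x₀ : E} (hx₀ : a x₀ = 0)
    (A : ι → E →ᵃ[ℝ] ℝ) {ρ : ι → Bool} {x y : E}
    (hx : x ∈ interior (signRegion (fun i => A i) ρ))
    (hy : y ∈ interior (signRegion (fun i => A i) ρ)) (hax : 0 ≤ a x) (hay : a y ≤ 0) :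
    ρ ∈ fullSignPatterns fun i (k : LinearMap.ker a.linear) => A i (k + x₀) := by
  obtain ⟨z, hz, hz0⟩ := (convex_signRegion A ρ).exists_mem_interior_eq_zero a hx hy hax hay
  have hK : z - x₀ ∈ LinearMap.ker a.linear := by
    simp [LinearMap.mem_ker, ← vsub_eq_sub, AffineMap.linearMap_vsub, hz0, hx₀]
  have hφ : Continuous fun k : LinearMap.ker a.linear => (k : E) + x₀ :=
    continuous_subtype_val.add continuous_const
  refine ⟨⟨z - x₀, hK⟩, preimage_interior_subset_interior_preimage
    (t := signRegion (fun i => ⇑(A i)) ρ) hφ ?_⟩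
  simpa using hz

theorem ncard_fullSignPatterns_le {s : ℕ} (A : Fin s → E →ᵃ[ℝ] ℝ) :
    (fullSignPatterns fun i => ⇑(A i)).ncard ≤ (s + 1) ^ finrank ℝ E := by
  induction s generalizing E with
  | zero => exact (ncard_le_ncard (subset_univ _)).trans (by simp)
  | succ s ih =>
    have hA : (fun i => ⇑(A i)) = Fin.cons ⇑(A 0) fun i => ⇑(Fin.tail A i) := by
      funext i; exact Fin.cases rfl (fun _ => rfl) i
    rw [hA]
    by_cases ha : (A 0).linear = 0
    · have hconst : ∀ x, A 0 x = A 0 0 := fun x => by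
        simpa [ha] using congrFun (A 0).decomp x
      refine (ncard_fullSignPatterns_cons_le _ _ ∅ fun ρ x _ y _ hx hy => ?_).trans
        (by simpa using (ih (Fin.tail A)).trans (Nat.pow_le_pow_left (by omega) _))
      linarith [hconst x, hconst y]
    · obtain ⟨x₀, hx₀⟩ := ((A 0).linear_surjective_iff.1 (LinearMap.surjective ha)) 0
      set K := LinearMap.ker (A 0).linear
      set B : Fin s → K →ᵃ[ℝ] ℝ := fun i =>
        (Fin.tail A i).comp ((AffineEquiv.vaddConst ℝ x₀).toAffineMap.comp K.subtype.toAffineMap)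
      have hB : (fun i => ⇑(B i)) = fun i (k : K) => Fin.tail A i (k + x₀) := by
        funext i k; simp [B, vadd_eq_add]
      have hdim : finrank ℝ K + 1 = finrank ℝ E := Module.Dual.finrank_ker_add_one_of_ne_zero ha
      calc _ ≤ (s + 1) ^ finrank ℝ E + (s + 1) ^ finrank ℝ K :=
            (ncard_fullSignPatterns_cons_le _ _ _ fun ρ x hx y hy hax hay =>
              hB ▸ mem_fullSignPatterns_restrict _ hx₀ _ hx hy hax.le hay).trans
            (add_le_add (ih _) (ih B))
        _ ≤ (s + 1 + 1) ^ finrank ℝ E := by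
          rw [← hdim, pow_succ, pow_succ]
          nlinarith [Nat.pow_le_pow_left (Nat.le_succ (s + 1)) (finrank ℝ K)]

lemma dense_iUnion_interior_signRegion {ι : Type*} [Finite ι] (ℓ : ι → E →ᵃ[ℝ] ℝ) :
    Dense (⋃ σ, interior (signRegion (fun i => ℓ i) σ)) := by
  have hopen : ∀ i, IsOpen {x | ℓ i x ≠ 0 ∨ ℓ i = 0} := fun i => by
    by_cases h : ℓ i = 0
    · simp [h]
    · simpa [h] using isOpen_ne_fun (ℓ i).continuous_of_finiteDimensional continuous_const
  have hdense : ∀ i, Dense {x | ℓ i x ≠ 0 ∨ ℓ i = 0} := fun i => by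
    by_cases h : ℓ i = 0
    · simp [h]
    · simpa [h] using dense_setOf_ne_zero h
  -- Off the zero sets of the nonzero `ℓ i` the sign pattern is locally constant.
  refine (dense_iInter_of_isOpen hopen hdense).mono fun x hx => mem_iUnion.2
    ⟨fun i => decide (0 < ℓ i x), mem_interior_iff_mem_nhds.2 (Filter.eventually_all.2 fun i => ?_)⟩
  have hcont := (ℓ i).continuous_of_finiteDimensional.tendsto x
  rcases mem_iInter.1 hx i with h | h
  · rcases h.lt_or_gt with h | h
    · filter_upwards [hcont.eventually (gt_mem_nhds h)] with y hy
      simp [h.not_gt, hy.not_gt]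
    · filter_upwards [hcont.eventually (lt_mem_nhds h)] with y hy
      simp [h, hy]
  · exact Filter.Eventually.of_forall fun y => by simp [h]

end Arrangements

section Cells

variable {E : Type*} [TopologicalSpace E]

structure IsCellFamily (cells : Finset (Set E)) : Prop where
  isOpen : ∀ c ∈ cells, IsOpen c
  nonempty : ∀ c ∈ cells, c.Nonempty
  dense : Dense (⋃ c ∈ cells, c)

lemma isCellFamily_singleton_univ [Nonempty E] : IsCellFamily {(univ : Set E)} :=
  ⟨by simp, by simp, by simp⟩

open Classical in
def refineBySigns {ι : Type*} [Fintype ι] [DecidableEq ι] (cells : Finset (Set E))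
    (u : ι → E → ℝ) : Finset (Set E) :=
  cells.biUnion fun c => ((Finset.univ : Finset (ι → Bool)).filter fun σ =>
    (c ∩ interior (signRegion u σ)).Nonempty).image fun σ => c ∩ interior (signRegion u σ)

lemma mem_refineBySigns {ι : Type*} [Fintype ι] [DecidableEq ι] {cells : Finset (Set E)}
    {u : ι → E → ℝ} {c' : Set E} : c' ∈ refineBySigns cells u ↔
      ∃ c ∈ cells, ∃ σ, (c ∩ interior (signRegion u σ)).Nonempty ∧
        c ∩ interior (signRegion u σ) = c' := by
  simp [refineBySigns]

end Cells

section CellwiseAffine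

variable {E : Type*} [NormedAddCommGroup E] [NormedSpace ℝ E]

def IsAffineOn (c : Set E) (p : E → ℝ) : Prop :=
  ∃ a : E →ᵃ[ℝ] ℝ, EqOn p a c

namespace IsAffineOn

variable {c c' : Set E} {p q : E → ℝ}

lemma mono (h : IsAffineOn c p) (hc : c' ⊆ c) : IsAffineOn c' p :=
  let ⟨a, ha⟩ := h; ⟨a, ha.mono hc⟩

lemma congr (h : IsAffineOn c p) (hpq : EqOn p q c) : IsAffineOn c q :=
  let ⟨a, ha⟩ := h; ⟨a, hpq.symm.trans ha⟩

lemma const (c : Set E) (r : ℝ) : IsAffineOn c fun _ => r :=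
  ⟨AffineMap.const ℝ E r, fun _ _ => rfl⟩

lemma add (hp : IsAffineOn c p) (hq : IsAffineOn c q) : IsAffineOn c (p + q) :=
  let ⟨a, ha⟩ := hp; let ⟨b, hb⟩ := hq; ⟨a + b, fun x hx => by simp [ha hx, hb hx]⟩

lemma smul (r : ℝ) (hp : IsAffineOn c p) : IsAffineOn c (r • p) :=
  let ⟨a, ha⟩ := hp; ⟨r • a, fun x hx => by simp [ha hx]⟩

end IsAffineOn

def IsConvexCellwiseAffine (cells : Finset (Set E)) (p : E → ℝ) : Prop :=
  ConvexOn ℝ univ p ∧ ∀ c ∈ cells, IsAffineOn c p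

namespace IsConvexCellwiseAffine

variable {cells : Finset (Set E)} {p q : E → ℝ}

lemma of_affineMap (cells : Finset (Set E)) (a : E →ᵃ[ℝ] ℝ) : IsConvexCellwiseAffine cells a :=
  ⟨a.convexOn_univ, fun _ _ => ⟨a, eqOn_refl _ _⟩⟩

lemma const (cells : Finset (Set E)) (r : ℝ) : IsConvexCellwiseAffine cells fun _ => r :=
  ⟨convexOn_const r convex_univ, fun c _ => IsAffineOn.const c r⟩

lemma add (hp : IsConvexCellwiseAffine cells p) (hq : IsConvexCellwiseAffine cells q) :
    IsConvexCellwiseAffine cells (p + q) :=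
  ⟨hp.1.add hq.1, fun c hc => (hp.2 c hc).add (hq.2 c hc)⟩

lemma smul {r : ℝ} (hr : 0 ≤ r) (hp : IsConvexCellwiseAffine cells p) :
    IsConvexCellwiseAffine cells (r • p) :=
  ⟨hp.1.smul hr, fun c hc => (hp.2 c hc).smul r⟩

lemma sum {ι : Type*} (s : Finset ι) {f : ι → E → ℝ}
    (hf : ∀ i ∈ s, IsConvexCellwiseAffine cells (f i)) :
    IsConvexCellwiseAffine cells (∑ i ∈ s, f i) :=
  Finset.sum_induction f _ (fun _ _ => add) (const cells 0) hf

lemma anti {cells' : Finset (Set E)} (hp : IsConvexCellwiseAffine cells p)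
    (h : ∀ c' ∈ cells', ∃ c ∈ cells, c' ⊆ c) : IsConvexCellwiseAffine cells' p :=
  ⟨hp.1, fun c' hc' => let ⟨c, hc, hsub⟩ := h c' hc'; (hp.2 c hc).mono hsub⟩

end IsConvexCellwiseAffine

lemma ConvexOn.le_of_eqOn_affine {p : E → ℝ} (hp : ConvexOn ℝ univ p) {U : Set E}
    (hU : IsOpen U) {a : E →ᵃ[ℝ] ℝ} (ha : EqOn p a U) {x₀ : E} (hx₀ : x₀ ∈ U) (x : E) :
    a x ≤ p x := by
  have hmin : IsLocalMin (p - ⇑a) x₀ :=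
    Filter.eventually_of_mem (hU.mem_nhds hx₀) fun y hy => by simp [← ha hy, ← ha hx₀]
  have := IsMinOn.of_isLocalMin_of_convex_univ hmin (hp.sub a.concaveOn_univ) x
  simpa [ha hx₀] using this

lemma List.foldl_max_le_iff {α β : Type*} [LinearOrder β] (g : α → β) (l : List α) (r t : β) :
    l.foldl (fun r b => max r (g b)) r ≤ t ↔ r ≤ t ∧ ∀ b ∈ l, g b ≤ t := by
  induction l generalizing r with
  | nil => simp
  | cons b l ih => simp [ih, and_assoc]

variable [FiniteDimensional ℝ E]

lemma IsConvexCellwiseAffine.exists_eq_foldl_max {cells : Finset (Set E)}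
    (hc : IsCellFamily cells) {p : E → ℝ} (hp : IsConvexCellwiseAffine cells p) :
    ∃ (a : E →ᵃ[ℝ] ℝ) (as : List (E →ᵃ[ℝ] ℝ)), as.length < cells.card ∧
      ∀ x, p x = as.foldl (fun r b => max r (b x)) (a x) := by
  choose! ℓ hℓ using hp.2
  have hne : cells.toList.map ℓ ≠ [] := by
    obtain ⟨x, hx⟩ := hc.dense.nonempty
    obtain ⟨c, hc', -⟩ := mem_iUnion₂.1 hx
    simpa using List.ne_nil_of_mem (Finset.mem_toList.2 hc')
  obtain ⟨a, as, hl⟩ := List.exists_cons_of_ne_nil hne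
  have hlen := congrArg List.length hl
  simp only [List.length_map, Finset.length_toList, List.length_cons] at hlen
  have hmem : ∀ c ∈ cells, ℓ c = a ∨ ℓ c ∈ as := fun c hc' =>
    List.mem_cons.1 (hl ▸ List.mem_map_of_mem (Finset.mem_toList.2 hc'))
  have hle : ∀ b ∈ a :: as, ∀ x, b x ≤ p x := by
    intro b hb x
    obtain ⟨c, hc', rfl⟩ : ∃ c ∈ cells, ℓ c = b := by simpa [← hl] using hb
    exact hp.1.le_of_eqOn_affine (hc.isOpen c hc') (hℓ c hc') (hc.nonempty c hc').some_mem x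
  refine ⟨a, as, by omega, fun x => le_antisymm ?_ ?_⟩
  · have hx : x ∈ closure (⋃ c ∈ cells, c) := hc.dense.closure_eq ▸ mem_univ x
    rw [Finset.closure_biUnion] at hx
    obtain ⟨c, hc', hx⟩ := mem_iUnion₂.1 hx
    rw [(hℓ c hc').closure hp.1.locallyLipschitz.continuous
      (ℓ c).continuous_of_finiteDimensional hx]
    have hmax := (List.foldl_max_le_iff (fun b : E →ᵃ[ℝ] ℝ => b x) as (a x) _).1 le_rfl
    rcases hmem c hc' with h | h
    · exact h ▸ hmax.1
    · exact hmax.2 _ h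
  · exact (List.foldl_max_le_iff _ _ _ _).2 ⟨hle a List.mem_cons_self x,
      fun b hb => hle b (List.mem_cons_of_mem a hb) x⟩

lemma card_refineBySigns_le {cells : Finset (Set E)} {w : ℕ} {u : Fin w → E → ℝ}
    (hopen : ∀ c ∈ cells, IsOpen c) (hu : ∀ c ∈ cells, ∀ i, IsAffineOn c (u i)) :
    (refineBySigns cells u).card ≤ cells.card * (w + 1) ^ finrank ℝ E := by
  refine Finset.card_biUnion_le.trans ((Finset.sum_le_card_nsmul _ _ _ fun c hc =>
    Finset.card_image_le.trans ?_).trans_eq (smul_eq_mul _ _))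
  choose ℓ hℓ using hu c hc
  rw [← ncard_coe_finset, Finset.coe_filter_univ]
  refine le_trans (ncard_le_ncard (fun σ hσ => ?_) (toFinite _)) (ncard_fullSignPatterns_le ℓ)
  replace hσ : (c ∩ interior (signRegion u σ)).Nonempty := hσ
  rw [(hopen c hc).inter_interior_signRegion_congr hℓ] at hσ
  exact hσ.mono inter_subset_right

lemma IsCellFamily.refineBySigns {ι : Type*} [Fintype ι] [DecidableEq ι]
    {cells : Finset (Set E)} {u : ι → E → ℝ} (hc : IsCellFamily cells)
    (hu : ∀ c ∈ cells, ∀ i, IsAffineOn c (u i)) : IsCellFamily (refineBySigns cells u) where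
  isOpen c' hc' := by
    obtain ⟨c, hcc, σ, -, rfl⟩ := mem_refineBySigns.1 hc'
    exact (hc.isOpen c hcc).inter isOpen_interior
  nonempty c' hc' := by
    obtain ⟨c, -, σ, hne, rfl⟩ := mem_refineBySigns.1 hc'
    exact hne
  dense := by
    refine dense_closure.1 (hc.dense.mono (iUnion₂_subset fun c hc' => ?_))
    choose ℓ hℓ using hu c hc'
    refine ((dense_iUnion_interior_signRegion ℓ).open_subset_closure_inter
      (hc.isOpen c hc')).trans (closure_mono ?_)
    rw [inter_iUnion]
    refine iUnion_subset fun σ x hx => ?_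
    rw [← (hc.isOpen c hc').inter_interior_signRegion_congr hℓ] at hx
    exact mem_iUnion₂.2 ⟨_, mem_refineBySigns.2 ⟨c, hc', σ, ⟨x, hx⟩, rfl⟩, hx⟩

end CellwiseAffine

section DCDecomposition

variable {E : Type*} [NormedAddCommGroup E] [NormedSpace ℝ E]

def HasDCDecomposition {ι : Type*} (cells : Finset (Set E)) (F : E → ι → ℝ) : Prop :=
  ∃ P Q : ι → E → ℝ,
    (∀ i, IsConvexCellwiseAffine cells (P i) ∧ IsConvexCellwiseAffine cells (Q i)) ∧
      ∀ x i, F x i = P i x - Q i x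

namespace HasDCDecomposition

variable {cells : Finset (Set E)}

lemma of_affineMap {ι : Type*} (F : E →ᵃ[ℝ] (ι → ℝ)) : HasDCDecomposition {univ} F :=
  ⟨fun i => (AffineMap.proj i).comp F, 0,
    fun i => ⟨.of_affineMap _ _, .const _ 0⟩, fun x i => by simp⟩

lemma isAffineOn {ι : Type*} {F : E → ι → ℝ} (hF : HasDCDecomposition cells F) {c : Set E}
    (hc : c ∈ cells) (i : ι) : IsAffineOn c fun x => F x i := by
  obtain ⟨P, Q, hPQ, hF⟩ := hF
  refine (((hPQ i).1.2 c hc).add (((hPQ i).2.2 c hc).smul (-1))).congr fun x _ => ?_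
  simp [hF, sub_eq_add_neg]

lemma comp_isAffineMap {w m : ℕ} {F : E → Fin w → ℝ} (hF : HasDCDecomposition cells F)
    {g : (Fin w → ℝ) → Fin m → ℝ} (hg : IsAffineMap g) :
    HasDCDecomposition cells fun x => g (F x) := by
  obtain ⟨B, b, hg⟩ := hg
  obtain ⟨P, Q, hPQ, hF⟩ := hF
  refine ⟨fun i => ∑ j, ((B i j)⁺ • P j + (B i j)⁻ • Q j) + fun _ => (b i)⁺,
    fun i => ∑ j, ((B i j)⁺ • Q j + (B i j)⁻ • P j) + fun _ => (b i)⁻, fun i => ⟨?_, ?_⟩,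
    fun x i => ?_⟩
  · exact (IsConvexCellwiseAffine.sum _ fun j _ =>
      ((hPQ j).1.smul (posPart_nonneg _)).add ((hPQ j).2.smul (negPart_nonneg _))).add
      (.const _ _)
  · exact (IsConvexCellwiseAffine.sum _ fun j _ =>
      ((hPQ j).2.smul (posPart_nonneg _)).add ((hPQ j).1.smul (negPart_nonneg _))).add
      (.const _ _)
  · have hsplit : ∀ r s t : ℝ, r * (s - t) = (r⁺ * s + r⁻ * t) - (r⁺ * t + r⁻ * s) := by
      intro r s t
      nth_rw 1 [← posPart_sub_negPart r]
      ring
    simp only [hg, hF, hsplit, Pi.add_apply, Finset.sum_apply, Pi.smul_apply, smul_eq_mul,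
      Finset.sum_sub_distrib]
    nth_rw 1 [← posPart_sub_negPart (b i)]
    ring

lemma comp_relu {w : ℕ} {F : E → Fin w → ℝ} (hF : HasDCDecomposition cells F) :
    HasDCDecomposition (refineBySigns cells fun i x => F x i) fun x i => relu (F x i) := by
  obtain ⟨P, Q, hPQ, hF⟩ := hF
  have hsub : ∀ c' ∈ refineBySigns cells (fun i x => F x i), ∃ c ∈ cells, c' ⊆ c := by
    intro c' hc'
    obtain ⟨c, hc, σ, -, rfl⟩ := mem_refineBySigns.1 hc'
    exact ⟨c, hc, inter_subset_left⟩
  refine ⟨fun i => P i ⊔ Q i, Q, fun i => ⟨⟨(hPQ i).1.1.sup (hPQ i).2.1, fun c' hc' => ?_⟩,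
    (hPQ i).2.anti hsub⟩, fun x i => ?_⟩
  · obtain ⟨c, hc, σ, -, rfl⟩ := mem_refineBySigns.1 hc'
    have hσ : ∀ x ∈ c ∩ interior (signRegion (fun i x => F x i) σ),
        (0 < P i x - Q i x ↔ σ i = true) := fun x hx => by
      simpa [hF] using interior_subset hx.2 i
    cases h : σ i
    · refine (((hPQ i).2.2 c hc).mono inter_subset_left).congr fun x hx => ?_
      have := hσ x hx
      simp only [h, Bool.false_eq_true, iff_false, not_lt, sub_nonpos] at this
      simp [this]
    · refine (((hPQ i).1.2 c hc).mono inter_subset_left).congr fun x hx => ?_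
      have := hσ x hx
      simp only [h, iff_true, sub_pos] at this
      simp [this.le]
  · simp [relu, hF, ← max_sub_sub_right]

end HasDCDecomposition

end DCDecomposition

section AffineMaps

variable {n m k : ℕ}

lemma isAffineMap_iff {f : (Fin n → ℝ) → Fin m → ℝ} :
    IsAffineMap f ↔ ∃ F : (Fin n → ℝ) →ᵃ[ℝ] (Fin m → ℝ), ⇑F = f := by
  constructor
  · rintro ⟨A, b, hf⟩
    refine ⟨(Matrix.toLin' A).toAffineMap + AffineMap.const ℝ _ b,
      funext fun x => funext fun i => ?_⟩
    simp [hf, Matrix.mulVec, dotProduct]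
  · rintro ⟨F, rfl⟩
    refine ⟨LinearMap.toMatrix' F.linear, F 0, fun x i => ?_⟩
    have hx : F x = F.linear x + F 0 := congrFun F.decomp x
    rw [hx, Pi.add_apply, ← LinearMap.toMatrix'_mulVec]
    rfl

lemma isAffineMap_of_forall_apply {f : (Fin n → ℝ) → Fin m → ℝ}
    (h : ∀ i, ∃ a : (Fin n → ℝ) →ᵃ[ℝ] ℝ, ∀ x, f x i = a x) : IsAffineMap f := by
  choose a ha using h
  exact isAffineMap_iff.2 ⟨AffineMap.pi a, funext fun x => funext fun i => (ha i x).symm⟩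

lemma isAffineMap_id : IsAffineMap fun x : Fin n → ℝ => x :=
  isAffineMap_iff.2 ⟨AffineMap.id ℝ _, rfl⟩

lemma IsAffineMap.comp {g : (Fin m → ℝ) → Fin k → ℝ} {f : (Fin n → ℝ) → Fin m → ℝ}
    (hg : IsAffineMap g) (hf : IsAffineMap f) : IsAffineMap fun x => g (f x) := by
  obtain ⟨G, rfl⟩ := isAffineMap_iff.1 hg
  obtain ⟨F, rfl⟩ := isAffineMap_iff.1 hf
  exact isAffineMap_iff.2 ⟨G.comp F, rfl⟩

end AffineMaps

namespace ComputesA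

variable {ρ : ℝ → ℝ} {n m k : ℕ} {ws ws' : List ℕ}

lemma comp_isAffineMap {g : (Fin m → ℝ) → Fin k → ℝ} {f : (Fin n → ℝ) → Fin m → ℝ}
    (hg : ComputesA ρ m ws k g) (hf : IsAffineMap f) : ComputesA ρ n ws k fun x => g (f x) := by
  cases hg with
  | nil g hg => exact nil _ (hg.comp hf)
  | cons f₀ g hf₀ hg => exact cons (fun x => f₀ (f x)) g (hf₀.comp hf) hg

lemma isAffineMap_comp {g : (Fin n → ℝ) → Fin m → ℝ} {f : (Fin m → ℝ) → Fin k → ℝ}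
    (hg : ComputesA ρ n ws m g) (hf : IsAffineMap f) : ComputesA ρ n ws k fun x => f (g x) := by
  induction hg with
  | nil g hg => exact nil _ (hf.comp hg)
  | cons f₀ g hf₀ _ ih => exact cons f₀ _ hf₀ (ih hf)

lemma comp {g : (Fin n → ℝ) → Fin m → ℝ} {h : (Fin m → ℝ) → Fin k → ℝ}
    (hg : ComputesA ρ n ws m g) (hh : ComputesA ρ m ws' k h) :
    ComputesA ρ n (ws ++ ws') k fun x => h (g x) := by
  induction hg with
  | nil g hg => exact hh.comp_isAffineMap hg
  | cons f₀ g hf₀ _ ih => exact cons f₀ _ hf₀ (ih hh)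

/-- Extra neurons are fed zero weights and ignored by the next layer. -/
lemma mono_widths {f : (Fin n → ℝ) → Fin m → ℝ} (hf : ComputesA ρ n ws m f)
    (hws : List.Forall₂ (· ≤ ·) ws ws') : ComputesA ρ n ws' m f := by
  induction hf generalizing ws' with
  | nil f hf => cases hws; exact nil f hf
  | @cons n w m ws f₀ g hf₀ _ ih =>
    obtain _ | ⟨hw, hws⟩ := hws
    rename_i w' ws'
    have hext : IsAffineMap fun (y : Fin w → ℝ) (j : Fin w') =>
        if h : (j : ℕ) < w then y ⟨j, h⟩ else 0 := isAffineMap_of_forall_apply fun j => by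
      by_cases h : (j : ℕ) < w
      · exact ⟨AffineMap.proj ⟨j, h⟩, fun y => by simp [h]⟩
      · exact ⟨0, fun y => by simp [h]⟩
    have hres : IsAffineMap fun (z : Fin w' → ℝ) (i : Fin w) => z (Fin.castLE hw i) :=
      isAffineMap_of_forall_apply fun i => ⟨AffineMap.proj (Fin.castLE hw i), fun z => rfl⟩
    convert cons _ _ (hext.comp hf₀) ((ih hws).comp_isAffineMap hres) using 1
    funext x
    congr 1
    funext i
    simp

end ComputesA

theorem HasDCDecomposition.comp_computes {E : Type*} [NormedAddCommGroup E] [NormedSpace ℝ E]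
    [FiniteDimensional ℝ E] {w m : ℕ} {ws : List ℕ} {g : (Fin w → ℝ) → Fin m → ℝ}
    (hg : ComputesA relu w ws m g) {cells : Finset (Set E)} (hc : IsCellFamily cells)
    {F : E → Fin w → ℝ} (hF : HasDCDecomposition cells F) :
    ∃ cells' : Finset (Set E),
      cells'.card ≤ cells.card * (ws.map fun u => (u + 1) ^ finrank ℝ E).prod ∧
        IsCellFamily cells' ∧ HasDCDecomposition cells' fun x => g (F x) := by
  induction hg generalizing cells with
  | nil g hg => exact ⟨cells, by simp, hc, hF.comp_isAffineMap hg⟩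
  | @cons _ w _ ws f₀ g hf₀ _ ih =>
    have hu := hF.comp_isAffineMap hf₀
    obtain ⟨cells', hcard, hc', hF'⟩ :=
      ih (hc.refineBySigns fun _ hc i => hu.isAffineOn hc i) hu.comp_relu
    refine ⟨cells', hcard.trans ?_, hc', hF'⟩
    calc _ ≤ cells.card * (w + 1) ^ finrank ℝ E * (ws.map fun u => (u + 1) ^ finrank ℝ E).prod :=
          Nat.mul_le_mul_right _ (card_refineBySigns_le hc.isOpen fun _ hc i => hu.isAffineOn hc i)
      _ = _ := by simp [mul_assoc]

theorem exists_hasDCDecomposition_of_computes {n m : ℕ} {ws : List ℕ}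
    {f : (Fin n → ℝ) → Fin m → ℝ} (hf : Computes n ws m f) :
    ∃ cells : Finset (Set (Fin n → ℝ)), cells.card ≤ (ws.map fun w => (w + 1) ^ n).prod ∧
      IsCellFamily cells ∧ HasDCDecomposition cells f := by
  obtain ⟨cells, hcard, hc, hF⟩ := HasDCDecomposition.comp_computes hf
    isCellFamily_singleton_univ (.of_affineMap (AffineMap.id ℝ _))
  exact ⟨cells, by simpa using hcard, hc, hF⟩

section NarrowNetworks

lemma relu_sub_relu_neg (x : ℝ) : relu x - relu (-x) = x :=
  posPart_sub_negPart x

lemma add_relu_sub (a b : ℝ) : a + relu (b - a) = max a b := by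
  rcases le_total a b with h | h <;> simp [relu, h]

lemma computes_update_max {M : ℕ} (φ : (Fin M → ℝ) →ᵃ[ℝ] ℝ) (k : Fin M) :
    ComputesA relu M [M + M + 1] M fun v => update v k (max (v k) (φ v)) := by
  have hpre : IsAffineMap fun v : Fin M → ℝ =>
      Fin.append (Fin.append v (-v)) fun _ : Fin 1 => φ v - v k := by
    refine isAffineMap_of_forall_apply (Fin.addCases (Fin.addCases (fun j => ?_) (fun j => ?_))
      fun _ => ⟨φ - AffineMap.proj k, fun v => by simp⟩)
    · exact ⟨AffineMap.proj j, fun v => by simp⟩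
    · exact ⟨-AffineMap.proj j, fun v => by rw [Fin.append_left, Fin.append_right]; rfl⟩
  have hpost : IsAffineMap fun (y : Fin (M + M + 1) → ℝ) (i : Fin M) =>
      y (Fin.castAdd 1 (Fin.castAdd M i)) - y (Fin.castAdd 1 (Fin.natAdd M i)) +
        if i = k then y (Fin.natAdd (M + M) 0) else 0 := by
    refine isAffineMap_of_forall_apply fun i =>
      ⟨(AffineMap.proj (Fin.castAdd 1 (Fin.castAdd M i)) : (Fin (M + M + 1) → ℝ) →ᵃ[ℝ] ℝ) -
        AffineMap.proj (Fin.castAdd 1 (Fin.natAdd M i)) +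
        if i = k then AffineMap.proj (Fin.natAdd (M + M) 0) else 0, fun y => ?_⟩
    by_cases h : i = k <;> simp [h]
  convert ComputesA.cons _ _ hpre (ComputesA.nil _ hpost) using 1
  funext v i
  simp only [Fin.append_left, Fin.append_right, Pi.neg_apply, relu_sub_relu_neg]
  by_cases h : i = k
  · subst h
    simp [add_relu_sub]
  · simp [h]

lemma computes_foldl_update_max {M : ℕ} (k : Fin M) (φs : List ((Fin M → ℝ) →ᵃ[ℝ] ℝ))
    (hφ : ∀ φ ∈ φs, ∀ v t, φ (update v k t) = φ v) :
    ComputesA relu M (List.replicate φs.length (M + M + 1)) M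
      fun v => update v k (φs.foldl (fun r φ => max r (φ v)) (v k)) := by
  induction φs with
  | nil => simpa using ComputesA.nil (ρ := relu) _ isAffineMap_id
  | cons φ φs ih =>
    have := ComputesA.comp (computes_update_max φ k)
      (ih fun ψ hψ => hφ ψ (List.mem_cons_of_mem _ hψ))
    convert this using 1
    · simp [List.replicate_succ]
    funext v
    simp only [update_self, update_idem, List.foldl_cons]
    congr 1
    exact List.foldl_ext _ _ _ fun r ψ hψ => by rw [hφ ψ (List.mem_cons_of_mem _ hψ)]

lemma List.forall₂_replicate {α β : Type*} {R : α → β → Prop} {a : α} {b : β} (h : R a b)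
    (L : ℕ) : List.Forall₂ R (List.replicate L a) (List.replicate L b) := by
  induction L with
  | zero => exact .nil
  | succ L ih => exact .cons h ih

/-- The state is `(x, A, B) ∈ ℝⁿ × ℝ × ℝ`; the running maxima are accumulated in `A` and `B`. -/
theorem computes_foldl_max_sub {n : ℕ} (a b : (Fin n → ℝ) →ᵃ[ℝ] ℝ)
    (as bs : List ((Fin n → ℝ) →ᵃ[ℝ] ℝ)) :
    Computes n (List.replicate (as.length + bs.length) (2 * n + 6)) 1 fun x _ =>
      as.foldl (fun r a => max r (a x)) (a x) - bs.foldl (fun r b => max r (b x)) (b x) := by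
  unfold Computes
  let xpart : (Fin (n + 2) → ℝ) →ᵃ[ℝ] (Fin n → ℝ) :=
    (LinearMap.funLeft ℝ ℝ (Fin.castAdd 2)).toAffineMap
  have hxpart : ∀ v t (i : Fin 2), xpart (update v (Fin.natAdd n i) t) = xpart v := by
    intro v t i
    funext j
    exact update_of_ne (Fin.ne_of_val_ne (by simp; omega)) _ _
  have hinit : IsAffineMap fun x : Fin n → ℝ => Fin.append x ![a x, b x] := by
    refine isAffineMap_of_forall_apply (Fin.addCases (fun j => ⟨AffineMap.proj j, fun x => by simp⟩)
      fun i => ?_)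
    fin_cases i
    exacts [⟨a, fun x => by simp⟩, ⟨b, fun x => by simp⟩]
  have hfinal : IsAffineMap fun (v : Fin (n + 2) → ℝ) (_ : Fin 1) =>
      v (Fin.natAdd n 0) - v (Fin.natAdd n 1) := isAffineMap_of_forall_apply fun _ =>
    ⟨(AffineMap.proj (Fin.natAdd n 0) : (Fin (n + 2) → ℝ) →ᵃ[ℝ] ℝ) -
      AffineMap.proj (Fin.natAdd n 1), fun v => rfl⟩
  have hA := computes_foldl_update_max (Fin.natAdd n 0) (as.map fun a' => a'.comp xpart) <| by
    simp only [List.mem_map]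
    rintro _ ⟨a', -, rfl⟩ v t
    exact congrArg a' (hxpart v t 0)
  have hB := computes_foldl_update_max (Fin.natAdd n 1) (bs.map fun b' => b'.comp xpart) <| by
    simp only [List.mem_map]
    rintro _ ⟨b', -, rfl⟩ v t
    exact congrArg b' (hxpart v t 1)
  have hnet := ((hA.comp hB).isAffineMap_comp hfinal).comp_isAffineMap hinit
  rw [List.length_map, List.length_map, ← List.replicate_add] at hnet
  convert hnet.mono_widths (List.forall₂_replicate (by omega : n + 2 + (n + 2) + 1 ≤ 2 * n + 6) _)
    using 1
  funext x i
  have hx : xpart (Fin.append x ![a x, b x]) = x := funext fun j => by simp [xpart]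
  simp [List.foldl_map, hxpart, hx]

end NarrowNetworks

lemma succ_pow_pow_le (n L N : ℕ) : ((N + 1) ^ n) ^ L ≤ (1 + N ^ n) ^ (L * (n + 1) ^ 2) := by
  have hbase : (N + 1) ^ n ≤ (1 + N ^ n) ^ n := by
    rcases Nat.eq_zero_or_pos n with rfl | hn
    · simp
    · exact Nat.pow_le_pow_left (by have := Nat.le_self_pow hn.ne' N; omega) n
  calc ((N + 1) ^ n) ^ L ≤ ((1 + N ^ n) ^ n) ^ L := Nat.pow_le_pow_left hbase L
    _ = (1 + N ^ n) ^ (n * L) := (pow_mul _ _ _).symm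
    _ ≤ (1 + N ^ n) ^ (L * (n + 1) ^ 2) :=
      Nat.pow_le_pow_right (by omega) (by rw [mul_comm]; exact Nat.mul_le_mul_left L (by nlinarith))

theorem stmt_14_general (n₀ : ℕ) :
    ∃ C : ℝ, 0 < C ∧
      ∀ L N : ℕ, 1 ≤ L → 1 ≤ N →
        ∀ f : (Fin n₀ → ℝ) → Fin 1 → ℝ, HasCompactSupport f →
          Computes n₀ (List.replicate L N) 1 f →
          ∃ Lc : ℕ, (Lc : ℝ) ≤ C * ((1 + N ^ n₀ : ℕ) : ℝ) ^ (L * (n₀ + 1) ^ 2) ∧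
            Computes n₀ (List.replicate Lc (2 * n₀ + 6)) 1 f := by
  refine ⟨2, two_pos, fun L N _ _ f _ hf => ?_⟩
  obtain ⟨cells, hcard, hc, P, Q, hPQ, hf⟩ := exists_hasDCDecomposition_of_computes hf
  obtain ⟨a, as, has, hP⟩ := (hPQ 0).1.exists_eq_foldl_max hc
  obtain ⟨b, bs, hbs, hQ⟩ := (hPQ 0).2.exists_eq_foldl_max hc
  refine ⟨as.length + bs.length, ?_, ?_⟩
  · simp only [List.map_replicate, List.prod_replicate] at hcard
    have hcells := hcard.trans (succ_pow_pow_le n₀ L N)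
    exact_mod_cast (by omega : as.length + bs.length ≤ 2 * (1 + N ^ n₀) ^ (L * (n₀ + 1) ^ 2))
  · convert computes_foldl_max_sub a b as bs using 1
    funext x i
    rw [hf, Subsingleton.elim i 0, hP, hQ]

/-- every compactly supported function computed by a ReLU network with `L`
hidden layers of width `N` is also computed by a ReLU network with hidden layers of width
`2n₀ + 6` and at most `C · (1 + N^{n₀})^{L·(n₀+1)²}` hidden layers. -/
theorem stmt_14 (n₀ : ℕ) (h₀ : 1 ≤ n₀) :
    ∃ C : ℝ, 0 < C ∧
      ∀ L N : ℕ, 1 ≤ L → 1 ≤ N →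
        ∀ f : (Fin n₀ → ℝ) → Fin 1 → ℝ, HasCompactSupport f →
          Computes n₀ (List.replicate L N) 1 f →
          ∃ Lc : ℕ, (Lc : ℝ) ≤ C * ((1 + N ^ n₀ : ℕ) : ℝ) ^ (L * (n₀ + 1) ^ 2) ∧
            Computes n₀ (List.replicate Lc (2 * n₀ + 6)) 1 f :=
  stmt_14_general n₀
end
end

section
/- For every integer n ≥ 0 there is a function g : ℝ → ℝ computed by a ReLU network of design (1, 3, 3, …, 3, 1) with n + 3 hidden layers each of width 3 such that: |g(x) − x²| ≤ 4^{−n} for all x ∈ [−1, 1], g is Lipschitz continuous with Lipschitz constant 2, and g(x) = 1 for all x with |x| ≥ 1. -/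
open scoped BigOperators
open MeasureTheory

noncomputable section

/-- tent map -/
def Tm (t : ℝ) : ℝ := 2 * t - 4 * max (t - 1/2) 0

def Qm : ℕ → ℝ → ℝ
  | 0, t => t
  | m+1, t => t - Tm t / 2 + Qm m (Tm t) / 4

def Vm : ℕ → ℝ → ℝ → ℝ
  | 0, _, b => b
  | m+1, a, b => Vm m (2 * relu a - 4 * relu (a - 1/2))
      (4 * relu b - (2 * relu a - 4 * relu (a - 1/2)))

lemma Tm_nonneg {t : ℝ} (h0 : 0 ≤ t) (h1 : t ≤ 1) : 0 ≤ Tm t := by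
  unfold Tm; rcases le_total (t - 1/2) 0 with h | h
  · rw [max_eq_right h]; linarith
  · rw [max_eq_left h]; linarith

lemma Tm_le_one {t : ℝ} (h0 : 0 ≤ t) (h1 : t ≤ 1) : Tm t ≤ 1 := by
  unfold Tm; rcases le_total (t - 1/2) 0 with h | h
  · rw [max_eq_right h]; linarith
  · rw [max_eq_left h]; linarith

lemma Tm_sq {t : ℝ} (h0 : 0 ≤ t) (h1 : t ≤ 1) :
    t ^ 2 = t - Tm t / 2 + (Tm t) ^ 2 / 4 := by
  unfold Tm; rcases le_total (t - 1/2) 0 with h | h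
  · rw [max_eq_right h]; ring
  · rw [max_eq_left h]; ring

lemma Qm_sub_sq (m : ℕ) : ∀ t : ℝ, 0 ≤ t → t ≤ 1 →
    0 ≤ Qm m t - t ^ 2 ∧ Qm m t - t ^ 2 ≤ (1/4 : ℝ) ^ (m + 1) := by
  induction m with
  | zero => intro t h0 h1; simp only [Qm, pow_one]; constructor <;> nlinarith [sq_nonneg (t - 1/2)]
  | succ m ih =>
    intro t h0 h1
    have hT0 := Tm_nonneg h0 h1
    have hT1 := Tm_le_one h0 h1
    have h := ih (Tm t) hT0 hT1
    have hsq := Tm_sq h0 h1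
    have hkey : Qm (m+1) t - t ^ 2 = (Qm m (Tm t) - (Tm t) ^ 2) / 4 := by
      show (t - Tm t / 2 + Qm m (Tm t) / 4) - t ^ 2 = _
      rw [hsq]; ring
    rw [hkey]
    constructor
    · linarith [h.1]
    · have : (1/4:ℝ)^(m+1+1) = (1/4:ℝ)^(m+1)/4 := by ring
      rw [this]; linarith [h.2]

lemma Qm_zero (m : ℕ) : Qm m 0 = 0 := by
  induction m with
  | zero => rfl
  | succ m ih =>
    have hT : Tm 0 = 0 := by unfold Tm; rw [max_eq_right (by norm_num)]; ring
    show (0:ℝ) - Tm 0 / 2 + Qm m (Tm 0) / 4 = 0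
    rw [hT, ih]; ring

lemma Qm_one (m : ℕ) : Qm m 1 = 1 := by
  cases m with
  | zero => rfl
  | succ m =>
    have hT : Tm 1 = 0 := by unfold Tm; rw [max_eq_left (by norm_num)]; ring
    show (1:ℝ) - Tm 1 / 2 + Qm m (Tm 1) / 4 = 1
    rw [hT, Qm_zero]; ring

lemma Tm_lo {t : ℝ} (h : t ≤ 1/2) : Tm t = 2 * t := by
  unfold Tm; rw [max_eq_right (by linarith)]; ring

lemma Tm_hi {t : ℝ} (h : 1/2 ≤ t) : Tm t = 2 - 2 * t := by
  unfold Tm; rw [max_eq_left (by linarith)]; ring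

lemma Qm_lip (m : ℕ) : ∀ s t : ℝ, 0 ≤ s → s ≤ t → t ≤ 1 →
    0 ≤ Qm m t - Qm m s ∧ Qm m t - Qm m s ≤ 2 * (t - s) := by
  induction m with
  | zero => intro s t h0 hst h1; constructor <;> [simpa [Qm] using sub_nonneg.2 hst; · show t - s ≤ _; linarith]
  | succ m ih =>
    have claim1 : ∀ s t : ℝ, 0 ≤ s → s ≤ t → t ≤ 1/2 →
        0 ≤ Qm (m+1) t - Qm (m+1) s ∧ Qm (m+1) t - Qm (m+1) s ≤ 2 * (t - s) := by
      intro s t h0 hst h1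
      have hTs := Tm_lo (le_trans hst h1)
      have hTt := Tm_lo h1
      have h := ih (Tm s) (Tm t) (by rw [hTs]; linarith) (by rw [hTs, hTt]; linarith)
        (by rw [hTt]; linarith)
      have hd : Qm (m+1) t - Qm (m+1) s
          = (t - s) - (Tm t - Tm s)/2 + (Qm m (Tm t) - Qm m (Tm s))/4 := by
        show (t - Tm t / 2 + Qm m (Tm t) / 4) - (s - Tm s / 2 + Qm m (Tm s) / 4) = _
        ring
      rw [hd, hTs, hTt] at *
      constructor <;> [linarith [h.1]; linarith [h.2]]
    have claim2 : ∀ s t : ℝ, 1/2 ≤ s → s ≤ t → t ≤ 1 →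
        0 ≤ Qm (m+1) t - Qm (m+1) s ∧ Qm (m+1) t - Qm (m+1) s ≤ 2 * (t - s) := by
      intro s t h0 hst h1
      have hTs := Tm_hi h0
      have hTt := Tm_hi (le_trans h0 hst)
      have h := ih (Tm t) (Tm s) (by rw [hTt]; linarith) (by rw [hTs, hTt]; linarith)
        (by rw [hTs]; linarith)
      have hd : Qm (m+1) t - Qm (m+1) s
          = (t - s) - (Tm t - Tm s)/2 - (Qm m (Tm s) - Qm m (Tm t))/4 := by
        show (t - Tm t / 2 + Qm m (Tm t) / 4) - (s - Tm s / 2 + Qm m (Tm s) / 4) = _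
        ring
      rw [hd, hTs, hTt] at *
      constructor <;> [linarith [h.2]; linarith [h.1]]
    intro s t h0 hst h1
    rcases le_total t (1/2) with h | h
    · exact claim1 s t h0 hst h
    rcases le_total (1/2) s with h' | h'
    · exact claim2 s t h' hst h1
    · have a1 := claim1 s (1/2) h0 h' (le_refl _)
      have a2 := claim2 (1/2) t (le_refl _) h h1
      constructor <;> [linarith [a1.1, a2.1]; linarith [a1.2, a2.2]]

lemma Vm_eq (m : ℕ) : ∀ a b : ℝ, 0 ≤ a → a ≤ 1 → a - a ^ 2 ≤ b →
    Vm m a b = 4 ^ m * (b - a + Qm m a) := by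
  induction m with
  | zero => intro a b h0 h1 hb; show b = 1 * (b - a + a); ring
  | succ m ih =>
    intro a b h0 h1 hb
    have hbnn : 0 ≤ b := le_trans (by nlinarith) hb
    have hra : relu a = a := max_eq_left h0
    have hrb : relu b = b := max_eq_left hbnn
    have hTe : 2 * relu a - 4 * relu (a - 1/2) = Tm a := by
      rw [hra]; rfl
    have hT0 := Tm_nonneg h0 h1
    have hT1 := Tm_le_one h0 h1
    have hsq := Tm_sq h0 h1
    have hb' : Tm a - (Tm a) ^ 2 ≤ 4 * b - Tm a := by nlinarith
    have step : Vm (m+1) a b = Vm m (Tm a) (4 * b - Tm a) := by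
      show Vm m (2 * relu a - 4 * relu (a - 1/2))
        (4 * relu b - (2 * relu a - 4 * relu (a - 1/2))) = _
      rw [hTe, hrb]
    rw [step, ih (Tm a) (4 * b - Tm a) hT0 hT1 hb']
    have hQ : Qm (m+1) a = a - Tm a / 2 + Qm m (Tm a) / 4 := rfl
    rw [hQ]; ring

def AffF {k : ℕ} (α : (Fin k → ℝ) → ℝ) : Prop :=
  ∃ (r : Fin k → ℝ) (d : ℝ), ∀ z, α z = (∑ j, r j * z j) + d

lemma affF_out {k : ℕ} (c : ℝ) {β : (Fin k → ℝ) → ℝ} (hβ : AffF β) :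
    IsAffineMap (fun z (_ : Fin 1) => c * β z) := by
  obtain ⟨r, d, h⟩ := hβ
  refine ⟨fun _ j => c * r j, fun _ => c * d, ?_⟩
  intro z i
  show c * β z = _
  rw [h z, mul_add, Finset.mul_sum]
  simp [mul_assoc]

lemma tent_net (c : ℝ) : ∀ (m : ℕ) {k : ℕ} (α β : (Fin k → ℝ) → ℝ),
    AffF α → AffF β →
    ComputesA relu k (List.replicate m 3) 1 (fun z (_ : Fin 1) => c * Vm m (α z) (β z)) := by
  intro m
  induction m with
  | zero =>
    intro k α β _ hβ
    exact ComputesA.nil _ (affF_out c hβ)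
  | succ m ih =>
    intro k α β hα hβ
    obtain ⟨rα, dα, hα'⟩ := hα
    obtain ⟨rβ, dβ, hβ'⟩ := hβ
    have hf : IsAffineMap (fun z => (![α z, α z - 1/2, β z] : Fin 3 → ℝ)) := by
      refine ⟨![rα, rα, rβ], ![dα, dα - 1/2, dβ], ?_⟩
      intro z i
      fin_cases i <;> simp [hα' z, hβ' z] <;> ring
    have hg := ih (fun w => 2 * w 0 - 4 * w 1)
      (fun w => 4 * w 2 - (2 * w 0 - 4 * w 1))
      ⟨![2, -4, 0], 0, by intro z; simp [Fin.sum_univ_three]; ring⟩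
      ⟨![(-2 : ℝ), 4, 4], 0, by intro z; simp [Fin.sum_univ_three]; ring⟩
    have h := ComputesA.cons (ρ := relu)
      (fun z => (![α z, α z - 1/2, β z] : Fin 3 → ℝ)) _ hf hg
    have heq : (fun z => (fun w (_ : Fin 1) =>
        c * Vm m (2 * w 0 - 4 * w 1) (4 * w 2 - (2 * w 0 - 4 * w 1)))
          (fun i => relu ((![α z, α z - 1/2, β z] : Fin 3 → ℝ) i)))
        = fun z (_ : Fin 1) => c * Vm (m+1) (α z) (β z) := by
      funext z i
      simp [Vm]
    rw [List.replicate_succ]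
    exact heq ▸ h

lemma relu_add_neg (x : ℝ) : relu x + relu (-x) = |x| := by
  unfold relu
  rcases le_total 0 x with h | h
  · rw [max_eq_left h, max_eq_right (by linarith), abs_of_nonneg h]; ring
  · rw [max_eq_right h, max_eq_left (by linarith), abs_of_nonpos h]; ring

lemma relu_abs_sub (x : ℝ) : relu |x| - relu (|x| - 1) = min |x| 1 := by
  unfold relu
  rcases le_total |x| 1 with h | h
  · rw [max_eq_left (abs_nonneg x), max_eq_right (by linarith), min_eq_left h]; ring
  · rw [max_eq_left (abs_nonneg x), max_eq_left (by linarith), min_eq_right h]; ring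

lemma min1_lip (u v : ℝ) : |min u 1 - min v 1| ≤ |u - v| := by
  have h1 := le_abs_self (u - v)
  have h2 := neg_abs_le (u - v)
  rcases le_total u 1 with hu | hu <;> rcases le_total v 1 with hv | hv <;>
    rw [abs_sub_le_iff] <;>
    constructor <;>
    simp [min_eq_left, min_eq_right, hu, hv] <;> linarith

/-- a ReLU network with `n + 3` hidden layers of width 3 computes a function `g`
with `|g(x) - x²| ≤ 4^{-n}` on `[-1,1]`, Lipschitz constant 2, and `g ≡ 1` outside `[-1,1]`. -/
theorem stmt_19 (n : ℕ) :
    ∃ G : (Fin 1 → ℝ) → Fin 1 → ℝ,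
      Computes 1 (List.replicate (n + 3) 3) 1 G ∧
      (∀ x : ℝ, x ∈ Set.Icc (-1 : ℝ) 1 → |G (fun _ => x) 0 - x ^ 2| ≤ (4 : ℝ) ^ (-(n : ℤ))) ∧
      LipschitzWith 2 (fun x : ℝ => G (fun _ => x) 0) ∧
      ∀ x : ℝ, 1 ≤ |x| → G (fun _ => x) 0 = 1 := by
  set m := n + 1 with hm
  set f₀ : (Fin 1 → ℝ) → Fin 3 → ℝ := fun x => ![x 0, -(x 0), 0] with hf₀
  set f₁ : (Fin 3 → ℝ) → Fin 3 → ℝ := fun z => ![z 0 + z 1, z 0 + z 1 - 1, 0] with hf₁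
  set g₂ : (Fin 3 → ℝ) → Fin 1 → ℝ :=
    fun z (_ : Fin 1) => (1/4 : ℝ) ^ m * Vm m (z 0 - z 1) (z 0 - z 1) with hg₂
  have hcomp2 : ComputesA relu 3 (List.replicate m 3) 1 g₂ :=
    tent_net _ m (fun z => z 0 - z 1) (fun z => z 0 - z 1)
      ⟨![1, -1, 0], 0, by intro z; simp [Fin.sum_univ_three]; ring⟩
      ⟨![1, -1, 0], 0, by intro z; simp [Fin.sum_univ_three]; ring⟩
  have hf₁aff : IsAffineMap f₁ := by
    refine ⟨![![1,1,0], ![1,1,0], ![0,0,0]], ![0, -1, 0], ?_⟩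
    intro z i
    fin_cases i <;> simp [hf₁, Fin.sum_univ_three] <;> ring
  have hcomp1 := ComputesA.cons (ρ := relu) f₁ g₂ hf₁aff hcomp2
  have hf₀aff : IsAffineMap f₀ := by
    refine ⟨![![1], ![-1], ![0]], ![0, 0, 0], ?_⟩
    intro x i
    fin_cases i <;> simp [hf₀, Fin.sum_univ_one] <;> ring
  have hcomp0 := ComputesA.cons (ρ := relu) f₀ _ hf₀aff hcomp1
  have hval : ∀ x : ℝ,
      g₂ (fun i => relu (f₁ (fun i => relu (f₀ (fun _ => x) i)) i)) 0
        = Qm m (min |x| 1) := by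
    intro x
    have h0 : relu ((0 : ℝ)) = 0 := by unfold relu; simp
    have hz : (fun i => relu (f₀ (fun _ => x) i)) = ![relu x, relu (-x), 0] := by
      funext i; fin_cases i <;> simp [hf₀, h0]
    rw [hz]
    have hw : (fun i => relu (f₁ ![relu x, relu (-x), 0] i))
        = ![relu |x|, relu (|x| - 1), 0] := by
      funext i; fin_cases i <;> simp [hf₁, relu_add_neg x, h0]
    rw [hw]
    have ht : relu |x| - relu (|x| - 1) = min |x| 1 := relu_abs_sub x
    have htv : (![relu |x|, relu (|x| - 1), 0] : Fin 3 → ℝ) 0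
        - (![relu |x|, relu (|x| - 1), 0] : Fin 3 → ℝ) 1 = min |x| 1 := by
      simpa using ht
    show (1/4 : ℝ) ^ m * Vm m _ _ = _
    rw [htv]
    set t := min |x| 1 with htd
    have ht0 : 0 ≤ t := le_min (abs_nonneg x) zero_le_one
    have ht1 : t ≤ 1 := min_le_right _ _
    rw [Vm_eq m t t ht0 ht1 (by nlinarith [sq_nonneg t])]
    have hcan : (1/4 : ℝ) ^ m * 4 ^ m = 1 := by
      rw [← mul_pow]; norm_num
    calc (1/4 : ℝ) ^ m * (4 ^ m * (t - t + Qm m t))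
        = ((1/4 : ℝ) ^ m * 4 ^ m) * Qm m t := by ring
      _ = Qm m t := by rw [hcan, one_mul]
  refine ⟨_, hcomp0, ?_, ?_, ?_⟩
  · -- approximation
    intro x hx
    obtain ⟨hx1, hx2⟩ := hx
    have habs : |x| ≤ 1 := abs_le.2 ⟨hx1, hx2⟩
    rw [hval x, min_eq_left habs]
    have h := Qm_sub_sq m |x| (abs_nonneg x) habs
    rw [← sq_abs x]
    rw [abs_of_nonneg h.1]
    calc Qm m |x| - |x| ^ 2 ≤ (1/4 : ℝ) ^ (m + 1) := h.2
      _ ≤ (1/4 : ℝ) ^ n := pow_le_pow_of_le_one (by norm_num) (by norm_num)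
          (by omega)
      _ = (4 : ℝ) ^ (-(n : ℤ)) := by
          rw [zpow_neg, zpow_natCast, one_div, inv_pow]
  · -- Lipschitz
    apply LipschitzWith.of_dist_le_mul
    intro x y
    simp only [hval]
    rw [Real.dist_eq, Real.dist_eq]
    have key : ∀ a b : ℝ, 0 ≤ a → a ≤ 1 → 0 ≤ b → b ≤ 1 →
        |Qm m a - Qm m b| ≤ 2 * |a - b| := by
      intro a b ha0 ha1 hb0 hb1
      rcases le_total b a with h | h
      · have hq := Qm_lip m b a hb0 h ha1
        rw [abs_of_nonneg hq.1, abs_of_nonneg (by linarith : (0:ℝ) ≤ a - b)]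
        linarith [hq.2]
      · have hq := Qm_lip m a b ha0 h hb1
        rw [abs_sub_comm, abs_sub_comm a b,
          abs_of_nonneg hq.1, abs_of_nonneg (by linarith : (0:ℝ) ≤ b - a)]
        linarith [hq.2]
    have hc : ((2 : NNReal) : ℝ) = 2 := by norm_num
    rw [hc]
    calc |Qm m (min |x| 1) - Qm m (min |y| 1)|
        ≤ 2 * |min |x| 1 - min |y| 1| :=
          key _ _ (le_min (abs_nonneg x) zero_le_one) (min_le_right _ _)
            (le_min (abs_nonneg y) zero_le_one) (min_le_right _ _)
      _ ≤ 2 * |(|x| - |y|)| := by linarith [min1_lip |x| |y|]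
      _ ≤ 2 * |x - y| := by linarith [abs_abs_sub_abs_le_abs_sub x y]
  · -- constant outside
    intro x hx
    rw [hval x, min_eq_right hx, Qm_one]
end
end
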